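/- Let α ∈ ℤ_{≥0}^n, let r be the first ascent of α, and let α' be obtained from α by interchanging α_r and α_{r+1}. For every F' ∈ SSF(α'), the number of free entries r strictly below row r of F' equals the number of free entries r+1 strictly below row r of Φ_r(F'), and the number of free entries r+1 strictly below row r of F' equals the number of free entries r strictly below row r of Φ_r(F'). -/

import Mathlib

/-!
Fix a row `i > r`. Write `R_{i,r}` and `L_{i,r}` as the exchange of `r` and `r + 1` in a run of
columns ending at the chosen free entry. Condition (iv), together with the extremal choice of that
entry, shows that the exchange keeps the filling semistandard and does not change whether any
other entry is paired, pseudo-free or free. So each application of `R_{i,r}` turns exactly one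
free `r` of row `i` into a free `r + 1`, each application of `L_{i,r}` does the converse, and no
other row is affected. Hence `Φ_{i,r}` swaps the numbers of free `r`'s and free `(r + 1)`'s in
row `i` and fixes those of every other row; composing over the rows below `r` and summing row by
row gives both equalities.
-/

open Classical MvPolynomial

noncomputable section

namespace Skyline

/-- The box in row `i` and column `j` of the skyline diagram of the composition
`α = (α 1, …, α n)` (rows indexed top to bottom, row `i` has `α i` boxes). -/
def Box (n : ℕ) (α : ℕ → ℕ) (i j : ℕ) : Prop :=
  1 ≤ i ∧ i ≤ n ∧ 1 ≤ j ∧ j ≤ α i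

/-- `F` is a semistandard skyline filling for `α` (with the convention that
`F` takes the value `0` outside of the skyline diagram):
(i) entries weakly decrease from left to right along each row;
(ii) each entry satisfies `F i j ≤ i`;
(iii) the entries in each column are distinct;
(iv) whenever an entry `F i j` lies strictly below an entry `F i' j` in the same
column with `F i j < F i' j`, the box `(i', j+1)` belongs to the diagram and
`F i j < F i' (j+1)`. -/
def IsSSF (n : ℕ) (α : ℕ → ℕ) (F : ℕ → ℕ → ℕ) : Prop :=
  (∀ i j, ¬ Box n α i j → F i j = 0) ∧
  (∀ i j, Box n α i j → 1 ≤ F i j) ∧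
  (∀ i j, 1 ≤ j → Box n α i (j+1) → F i (j+1) ≤ F i j) ∧
  (∀ i j, Box n α i j → F i j ≤ i) ∧
  (∀ i i' j, Box n α i j → Box n α i' j → i ≠ i' → F i j ≠ F i' j) ∧
  (∀ i i' j, Box n α i j → Box n α i' j → i' < i → F i j < F i' j →
      Box n α i' (j+1) ∧ F i j < F i' (j+1))

/-- Column `j` of the filling `F` contains the entry `t`. -/
def ColContains (n : ℕ) (α : ℕ → ℕ) (F : ℕ → ℕ → ℕ) (j t : ℕ) : Prop :=
  ∃ i, Box n α i j ∧ F i j = t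

/-- The unpaired entry `t` in box `(i,j)` and the unpaired entry `t+1` in box
`(i',j')` form a pseudo-free pair: the `t+1` lies strictly above and strictly to
the right of the `t`, and every column strictly between them contains both `t`
and `t+1`. -/
def PseudoFreePair (n : ℕ) (α : ℕ → ℕ) (F : ℕ → ℕ → ℕ) (t i j i' j' : ℕ) : Prop :=
  Box n α i j ∧ F i j = t ∧ ¬ ColContains n α F j (t+1) ∧
  Box n α i' j' ∧ F i' j' = t+1 ∧ ¬ ColContains n α F j' t ∧
  i' < i ∧ j < j' ∧
  ∀ k, j < k → k < j' → ColContains n α F k t ∧ ColContains n α F k (t+1)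

/-- The entry `t` in box `(i,j)` of `F` is free: it is neither paired nor
pseudo-free. -/
def FreeT (n : ℕ) (α : ℕ → ℕ) (F : ℕ → ℕ → ℕ) (t i j : ℕ) : Prop :=
  Box n α i j ∧ F i j = t ∧ ¬ ColContains n α F j (t+1) ∧
  ¬ ∃ i' j', PseudoFreePair n α F t i j i' j'

/-- The entry `t+1` in box `(i,j)` of `F` is free: it is neither paired nor
pseudo-free. -/
def FreeTp1 (n : ℕ) (α : ℕ → ℕ) (F : ℕ → ℕ → ℕ) (t i j : ℕ) : Prop :=
  Box n α i j ∧ F i j = t+1 ∧ ¬ ColContains n α F j t ∧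
  ¬ ∃ i₀ j₀, PseudoFreePair n α F t i₀ j₀ i j

/-- The lowering operator `L_{r,t}`: if row `r` has a free entry `t+1`, replace
the rightmost free `t+1` in row `r` (in column `j`) by `t`, and exchange the
entries `t` and `t+1` in each column `k` of the maximal interval `j' ≤ k < j`
such that `F r k = t+1` and column `k` contains an entry `t` strictly below row
`r`; otherwise do nothing. -/
def Lop (n : ℕ) (α : ℕ → ℕ) (r t : ℕ) (F : ℕ → ℕ → ℕ) : ℕ → ℕ → ℕ :=
  if {j | FreeTp1 n α F t r j}.Nonempty then
    let j := sSup {j | FreeTp1 n α F t r j}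
    let S : Set ℕ := {k | k < j ∧ ∀ m, k ≤ m → m < j →
      F r m = t + 1 ∧ ∃ i, r < i ∧ Box n α i m ∧ F i m = t}
    fun i c =>
      if i = r ∧ c = j then t
      else if c ∈ S ∧ F i c = t then t + 1
      else if c ∈ S ∧ F i c = t + 1 then t
      else F i c
  else F

/-- The raising operator `R_{r,t}`: if row `r` has a free entry `t`, replace
the leftmost free `t` in row `r` (in column `j`) by `t+1`, and exchange the
entries `t` and `t+1` in each column `k` of the maximal interval `j' ≤ k < j`
such that `F r k = t` and column `k` contains an entry `t+1` strictly below row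
`r`; otherwise do nothing. -/
def Rop (n : ℕ) (α : ℕ → ℕ) (r t : ℕ) (F : ℕ → ℕ → ℕ) : ℕ → ℕ → ℕ :=
  if {j | FreeT n α F t r j}.Nonempty then
    let j := sInf {j | FreeT n α F t r j}
    let S : Set ℕ := {k | k < j ∧ ∀ m, k ≤ m → m < j →
      F r m = t ∧ ∃ i, r < i ∧ Box n α i m ∧ F i m = t + 1}
    fun i c =>
      if i = r ∧ c = j then t + 1
      else if c ∈ S ∧ F i c = t then t + 1
      else if c ∈ S ∧ F i c = t + 1 then t
      else F i c
  else F

/-- The involution `Φ_{r,t}`: with `n₁` the number of free entries `t+1` and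
`n₂` the number of free entries `t` in row `r`, apply `L_{r,t}` iterated
`n₁ - n₂` times if `n₁ > n₂`, apply `R_{r,t}` iterated `n₂ - n₁` times if
`n₁ < n₂`, and do nothing if `n₁ = n₂`. -/
def Phi (n : ℕ) (α : ℕ → ℕ) (r t : ℕ) (F : ℕ → ℕ → ℕ) : ℕ → ℕ → ℕ :=
  let n₁ := {j | FreeTp1 n α F t r j}.ncard
  let n₂ := {j | FreeT n α F t r j}.ncard
  if n₂ < n₁ then (Lop n α r t)^[n₁ - n₂] F
  else if n₁ < n₂ then (Rop n α r t)^[n₂ - n₁] F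
  else F

/-- The involution `Φ_r`: apply `Φ_{i,r}` for every row index `i` with
`r + 1 ≤ i ≤ n`. -/
def PhiAll (n : ℕ) (α : ℕ → ℕ) (r : ℕ) (F : ℕ → ℕ → ℕ) : ℕ → ℕ → ℕ :=
  (List.range' (r+1) (n - r)).foldl (fun G i => Phi n α i r G) F

/-- The monomial `x^F = ∏_{(i,j) ∈ D(α)} x_{F(i,j)}` of a filling `F`. -/
def weight (n : ℕ) (α : ℕ → ℕ) (F : ℕ → ℕ → ℕ) : MvPolynomial ℕ ℤ :=
  ∏ i ∈ Finset.Icc 1 n, ∏ j ∈ Finset.Icc 1 (α i), X (F i j)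

/-- The Demazure operator `π_r(f) = ∂_r(x_r f)`, characterized by
`(x_r - x_{r+1}) · π_r(f) = x_r f - x_{r+1} · (s_r f)`. -/
def demazure (r : ℕ) (f : MvPolynomial ℕ ℤ) : MvPolynomial ℕ ℤ :=
  if h : ∃ g, (X r - X (r+1)) * g
      = X r * f - X (r+1) * (rename (Equiv.swap r (r+1)) f)
  then h.choose else 0

/-- The composition obtained from `α` by interchanging `α r` and `α (r+1)`. -/
def swapComp (α : ℕ → ℕ) (r : ℕ) : ℕ → ℕ :=
  fun i => if i = r then α (r+1) else if i = r+1 then α r else α i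

/-- Auxiliary fuelled recursion for the key polynomial: if `α` is not a
partition, apply the Demazure operator `π_i` at the first ascent `i` of `α`
to the key polynomial of the composition with `α i` and `α (i+1)`
interchanged; if `α` is a partition, return `x₁^{α₁} ⋯ xₙ^{αₙ}`. -/
def keyAux (n : ℕ) : ℕ → (ℕ → ℕ) → MvPolynomial ℕ ℤ
  | 0, α => ∏ i ∈ Finset.Icc 1 n, (X i : MvPolynomial ℕ ℤ) ^ (α i)
  | (fuel+1), α =>
    if ∃ i, 1 ≤ i ∧ i < n ∧ α i < α (i+1) then
      demazure (sInf {i | 1 ≤ i ∧ i < n ∧ α i < α (i+1)})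
        (keyAux n fuel (swapComp α (sInf {i | 1 ≤ i ∧ i < n ∧ α i < α (i+1)})))
    else ∏ i ∈ Finset.Icc 1 n, (X i : MvPolynomial ℕ ℤ) ^ (α i)

/-- The key polynomial `κ_α` of the composition `α = (α 1, …, α n)`.
(`n * n` exceeds the number of inversions of `α`, so the fuel never runs out.) -/
def key (n : ℕ) (α : ℕ → ℕ) : MvPolynomial ℕ ℤ :=
  keyAux n (n * n) α

/-- `r` is the first ascent of `α`: `α 1 ≥ α 2 ≥ ⋯ ≥ α r` and `α r < α (r+1)`. -/
def FirstAscent (n : ℕ) (α : ℕ → ℕ) (r : ℕ) : Prop :=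
  1 ≤ r ∧ r + 1 ≤ n ∧ (∀ i, 1 ≤ i → i < r → α (i+1) ≤ α i) ∧ α r < α (r+1)

/-- Move the last `α (r+1) - α r` boxes of row `r` of `F'`, together with their
entries, down to row `r+1` (here `F' ∈ SSF(α')` with `α'` obtained from `α` by
interchanging `α r` and `α (r+1)`). -/
def moveDown (α : ℕ → ℕ) (r : ℕ) (F : ℕ → ℕ → ℕ) : ℕ → ℕ → ℕ :=
  fun i j =>
    if i = r ∧ α r < j then 0
    else if i = r + 1 ∧ α r < j then F r j
    else F i j

/-- The set `DF(F') = {F₀, F₁, …, F_m}` of derived fillings of `F' ∈ SSF(α')`,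
where `m` is the number of free entries `r` in row `r` of `F'`, `F₀` is obtained
from `F'` by moving the last `α (r+1) - α r` boxes of row `r` down to row `r+1`,
and `F_k = R_{r+1,r}^k(F₀)`. -/
def DF (n : ℕ) (α : ℕ → ℕ) (r : ℕ) (F' : ℕ → ℕ → ℕ) : Set (ℕ → ℕ → ℕ) :=
  {F | ∃ k, k ≤ {j | FreeT n (swapComp α r) F' r r j}.ncard ∧
    F = (Rop n α (r+1) r)^[k] (moveDown α r F')}

section Basic

variable {n : ℕ} {α : ℕ → ℕ} {F : ℕ → ℕ → ℕ} {i i' j j' : ℕ}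

theorem Box.of_le (h : Box n α i j') (hj : 1 ≤ j) (hjj : j ≤ j') : Box n α i j :=
  ⟨h.1, h.2.1, hj, hjj.trans h.2.2.2⟩

namespace IsSSF

variable (hF : IsSSF n α F)
include hF

theorem eq_zero (h : ¬ Box n α i j) : F i j = 0 := hF.1 i j h

theorem box_of_ne_zero (h : F i j ≠ 0) : Box n α i j := by
  by_contra hb
  exact h (hF.eq_zero hb)

theorem one_le (h : Box n α i j) : 1 ≤ F i j := hF.2.1 i j h

theorem succ_le (hj : 1 ≤ j) (h : Box n α i (j + 1)) : F i (j + 1) ≤ F i j :=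
  hF.2.2.1 i j hj h

theorem le_of_le (hj : 1 ≤ j) (hjj : j ≤ j') (h : Box n α i j') : F i j' ≤ F i j := by
  induction j', hjj using Nat.le_induction with
  | base => exact le_rfl
  | succ m hm ih => exact (hF.succ_le (hj.trans hm) h).trans (ih (h.of_le (hj.trans hm) m.le_succ))

theorem le_row (h : Box n α i j) : F i j ≤ i := hF.2.2.2.1 i j h

theorem row_eq (hb : Box n α i j) (hb' : Box n α i' j) (h : F i j = F i' j) : i = i' := by
  by_contra hne
  exact hF.2.2.2.2.1 i i' j hb hb' hne h

theorem lt_succ (hb : Box n α i j) (hb' : Box n α i' j) (hi : i' < i) (hlt : F i j < F i' j) :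
    Box n α i' (j + 1) ∧ F i j < F i' (j + 1) :=
  hF.2.2.2.2.2 i i' j hb hb' hi hlt

/-- Condition (iv) carries a `t` above row `B` leftwards through columns that all contain `t`. -/
theorem exists_above_of_colContains {t B b m v : ℕ}
    (hcols : ∀ k, b < k → k < m → ColContains n α F k t)
    (hv : v < B) (hbm : b < m) (hb : Box n α v m) (hval : F v m = t) :
    ∃ w < B, Box n α w (b + 1) ∧ F w (b + 1) = t := by
  induction m using Nat.strong_induction_on generalizing v with
  | _ m ih =>
  by_cases hm : m = b + 1
  · subst hm
    exact ⟨v, hv, hb, hval⟩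
  obtain ⟨c, rfl⟩ : ∃ c, m = c + 1 := ⟨m - 1, by omega⟩
  have hbc : Box n α v c := hb.of_le (by omega) (by omega)
  have hcols' : ∀ k, b < k → k < c → ColContains n α F k t :=
    fun k h1 h2 => hcols k h1 (by omega)
  rcases (hval ▸ hF.succ_le (by omega) hb : t ≤ F v c).eq_or_lt with heq | hlt
  · exact ih c (by omega) hcols' hv (by omega) hbc heq.symm
  · obtain ⟨w, hwb, hwt⟩ := hcols c (by omega) (by omega)
    by_cases hwB : w < B
    · exact ih c (by omega) hcols' hwB (by omega) hwb hwt
    · have := (hF.lt_succ hwb hbc (by omega) (by omega)).2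
      omega

theorem ne_of_below_left {t r j₀ : ℕ} (hb₀ : Box n α r j₀) (hv₀ : F r j₀ = t)
    (hcols : ∀ k, j < k → k < j₀ → ColContains n α F k t)
    (hb : Box n α i j) (hri : r < i) (hjj : j < j₀) : F i j ≠ t := by
  intro hv
  obtain ⟨w, hwr, hwb, hwt⟩ :=
    hF.exists_above_of_colContains hcols (Nat.lt_succ_self r) hjj hb₀ hv₀
  have hwj : Box n α w j := hwb.of_le hb.2.2.1 (by omega)
  rcases (hwt ▸ hF.succ_le hb.2.2.1 hwb : t ≤ F w j).eq_or_lt with heq | hlt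
  · exact absurd (hF.row_eq hb hwj (by rw [hv, heq])) (by omega)
  · have := (hF.lt_succ hb hwj (by omega) (by omega)).2
    omega

theorem ne_of_above_right {t r j₀ m : ℕ} (hb₀ : Box n α r j₀) (hlow : t ≤ F r j₀)
    (hcol : ∀ v < r, Box n α v j₀ → t ≤ F v j₀ → F r j₀ < F v j₀)
    (hcols : ∀ k, j₀ < k → k < m → ColContains n α F k t)
    (hir : i < r) (hb : Box n α i m) (hjm : j₀ < m) : F i m ≠ t := by
  intro hv
  obtain ⟨w, hwr, hwb, hwt⟩ := hF.exists_above_of_colContains hcols hir hjm hb hv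
  have hwj : Box n α w j₀ := hwb.of_le hb₀.2.2.1 (by omega)
  have hge : t ≤ F w j₀ := hwt ▸ hF.succ_le hb₀.2.2.1 hwb
  have := (hF.lt_succ hb₀ hwj hwr (hcol w hwr hwj hge)).2
  omega

end IsSSF

end Basic

section FreeChains

variable {n : ℕ} {α : ℕ → ℕ} {F : ℕ → ℕ → ℕ} {t r j₀ : ℕ}

/-- Move right along row `i`: a `t` below the `t + 1` pushes it one column further by condition
(iv), a `t` above it is excluded by `ne_of_above_right`, and without any `t` in its column the
`t + 1` would be pseudo-free with the free `t` at `(r, j₀)`. -/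
theorem FreeT.ne_succ_of_above_right (hF : IsSSF n α F) (hfree : FreeT n α F t r j₀) {i k : ℕ}
    (hir : i < r) (hjk : j₀ < k) (hb : Box n α i k)
    (hmid : ∀ m, j₀ < m → m < k → ColContains n α F m t ∧ ColContains n α F m (t + 1)) :
    F i k ≠ t + 1 := by
  obtain ⟨hb₀, hv₀, hnc, hnp⟩ := hfree
  intro hv
  by_cases hct : ColContains n α F k t
  · obtain ⟨w, hwb, hwt⟩ := hct
    rcases lt_or_gt_of_ne (show w ≠ i by rintro rfl; omega) with hlt | hgt
    · refine hF.ne_of_above_right hb₀ hv₀.ge (fun v hvr hbv hle => ?_)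
        (fun m h1 h2 => (hmid m h1 h2).1) (hlt.trans hir) hwb hjk hwt
      exact hv₀ ▸ lt_of_le_of_ne hle (fun he => absurd (hF.row_eq hb₀ hbv (hv₀.trans he)) hvr.ne')
    · obtain ⟨hbk, hlt⟩ := hF.lt_succ hwb hb hgt (by omega)
      have := hF.succ_le (by omega) hbk
      refine FreeT.ne_succ_of_above_right hF ⟨hb₀, hv₀, hnc, hnp⟩ hir (by omega) hbk
        (fun m h1 h2 => ?_) (by omega)
      rcases Nat.lt_or_ge m k with h3 | h3
      · exact hmid m h1 h3
      · obtain rfl : m = k := by omega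
        exact ⟨⟨w, hwb, hwt⟩, ⟨i, hb, hv⟩⟩
  · exact hnp ⟨i, k, hb₀, hv₀, hnc, hb, hv, hct, hir, hjk, hmid⟩
termination_by α i - k
decreasing_by have := hbk.2.2.2; omega

/-- As in `FreeT.ne_succ_of_above_right`, moving right along row `r`; when the column has no `t`,
the `t + 1` there is free, contradicting the maximality of `j₀`. -/
theorem FreeTp1.ne_succ_of_run (hF : IsSSF n α F) (hfree : FreeTp1 n α F t r j₀)
    (hmax : ∀ j, FreeTp1 n α F t r j → j ≤ j₀) {m : ℕ} (hjm : j₀ < m) (hb : Box n α r m)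
    (hrun : ∀ k, j₀ < k → k < m → F r k = t + 1 ∧ ∃ w, r < w ∧ Box n α w k ∧ F w k = t) :
    F r m ≠ t + 1 := by
  obtain ⟨hb₀, hv₀, hnc, hnp⟩ := hfree
  intro hv
  by_cases hct : ColContains n α F m t
  · obtain ⟨w, hwb, hwt⟩ := hct
    rcases lt_or_gt_of_ne (show w ≠ r by rintro rfl; omega) with hlt | hgt
    · refine hF.ne_of_above_right hb₀ (by omega) (fun v hvr hbv hle => ?_)
        (fun k h1 h2 => ?_) hlt hwb hjm hwt
      · have h1 : F v j₀ ≠ t := fun he => hnc ⟨v, hbv, he⟩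
        have h2 : F v j₀ ≠ t + 1 := fun he =>
          absurd (hF.row_eq hbv hb₀ (he.trans hv₀.symm)) hvr.ne
        omega
      · obtain ⟨-, w', -, hw'b, hw't⟩ := hrun k h1 h2
        exact ⟨w', hw'b, hw't⟩
    · obtain ⟨hbm, hlt⟩ := hF.lt_succ hwb hb hgt (by omega)
      have := hF.succ_le (by omega) hbm
      refine FreeTp1.ne_succ_of_run hF ⟨hb₀, hv₀, hnc, hnp⟩ hmax (by omega) hbm
        (fun k h1 h2 => ?_) (by omega)
      rcases Nat.lt_or_ge k m with h3 | h3
      · exact hrun k h1 h3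
      · obtain rfl : k = m := by omega
        exact ⟨hv, w, hgt, hwb, hwt⟩
  · have hfr : FreeTp1 n α F t r m := by
      refine ⟨hb, hv, hct, ?_⟩
      rintro ⟨i₀, k₀, hbi₀, hvi₀, hnck₀, -, -, -, -, hk₀m, hintm⟩
      rcases Nat.lt_trichotomy k₀ j₀ with h | rfl | h
      · exact hnc (hintm _ h hjm).1
      · exact hnc ⟨i₀, hbi₀, hvi₀⟩
      · exact hnck₀ ⟨r, hb.of_le (by omega) hk₀m.le, (hrun k₀ h hk₀m).1⟩
    exact absurd (hmax m hfr) (by omega)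
termination_by α r - m
decreasing_by have := hbm.2.2.2; omega

theorem FreeTp1.ne_succ_of_right (hF : IsSSF n α F) (hfree : FreeTp1 n α F t r j₀)
    (hmax : ∀ j, FreeTp1 n α F t r j → j ≤ j₀) {m : ℕ} (hjm : j₀ < m) (hb : Box n α r m) :
    F r m ≠ t + 1 := by
  intro hv
  have hb1 : Box n α r (j₀ + 1) := hb.of_le (by omega) hjm
  have := hF.succ_le hfree.1.2.2.1 hb1
  have := hF.le_of_le (by omega) (show j₀ + 1 ≤ m from hjm) hb
  have := hfree.2.1
  exact hfree.ne_succ_of_run hF hmax (by omega : j₀ < j₀ + 1) hb1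
    (fun k h1 h2 => absurd h2 (by omega)) (by omega)

end FreeChains

section SwapCols

/-- Both `R_{r,t}` and `L_{r,t}` exchange `t` and `t + 1` in a set `C` of columns. -/
def swapCols (F : ℕ → ℕ → ℕ) (t : ℕ) (C : Set ℕ) : ℕ → ℕ → ℕ :=
  fun i c => if c ∈ C then Equiv.swap t (t + 1) (F i c) else F i c

variable {n : ℕ} {α : ℕ → ℕ} {F : ℕ → ℕ → ℕ} {t : ℕ} {C : Set ℕ}

theorem swapCols_apply_of_mem {i c : ℕ} (hc : c ∈ C) :
    swapCols F t C i c = Equiv.swap t (t + 1) (F i c) := if_pos hc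

theorem swapCols_apply_of_notMem {i c : ℕ} (hc : c ∉ C) :
    swapCols F t C i c = F i c := if_neg hc

theorem swapCols_cases (i c : ℕ) :
    (swapCols F t C i c = F i c ∧ (c ∈ C → F i c ≠ t ∧ F i c ≠ t + 1)) ∨
    (c ∈ C ∧ F i c = t ∧ swapCols F t C i c = t + 1) ∨
    (c ∈ C ∧ F i c = t + 1 ∧ swapCols F t C i c = t) := by
  unfold swapCols
  by_cases hc : c ∈ C
  · simp only [if_pos hc]
    by_cases h1 : F i c = t
    · exact Or.inr (Or.inl ⟨hc, h1, by rw [h1, Equiv.swap_apply_left]⟩)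
    by_cases h2 : F i c = t + 1
    · exact Or.inr (Or.inr ⟨hc, h2, by rw [h2, Equiv.swap_apply_right]⟩)
    exact Or.inl ⟨Equiv.swap_apply_of_ne_of_ne h1 h2, fun _ => ⟨h1, h2⟩⟩
  · rw [if_neg hc]
    exact Or.inl ⟨rfl, fun h => absurd h hc⟩

theorem colContains_swapCols_of_mem {c v : ℕ} (hc : c ∈ C) :
    ColContains n α (swapCols F t C) c v ↔ ColContains n α F c (Equiv.swap t (t + 1) v) := by
  simp only [ColContains, swapCols, if_pos hc, Equiv.swap_apply_eq_iff]

theorem colContains_swapCols_of_notMem {c v : ℕ} (hc : c ∉ C) :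
    ColContains n α (swapCols F t C) c v ↔ ColContains n α F c v := by
  simp only [ColContains, swapCols, if_neg hc]

theorem colContains_swapCols {c v : ℕ}
    (h : c ∈ C → ColContains n α F c t ∧ ColContains n α F c (t + 1)) :
    ColContains n α (swapCols F t C) c v ↔ ColContains n α F c v := by
  by_cases hc : c ∈ C
  · rw [colContains_swapCols_of_mem hc]
    obtain ⟨ht, ht1⟩ := h hc
    by_cases hv : v = t
    · subst hv
      rw [Equiv.swap_apply_left]
      exact ⟨fun _ => ht, fun _ => ht1⟩
    by_cases hv' : v = t + 1
    · subst hv'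
      rw [Equiv.swap_apply_right]
      exact ⟨fun _ => ht1, fun _ => ht⟩
    rw [Equiv.swap_apply_of_ne_of_ne hv hv']
  · exact colContains_swapCols_of_notMem hc

/-- Exchanging two values keeps every column injective, so only the flag condition, the row
condition and condition (iv) need input. -/
theorem IsSSF.swapCols (hF : IsSSF n α F) (ht : 1 ≤ t)
    (hflag : ∀ i c, c ∈ C → F i c = t → t < i)
    (hrow : ∀ i j, 1 ≤ j → Box n α i (j + 1) →
      swapCols F t C i (j + 1) ≤ swapCols F t C i j)
    (hiv : ∀ i i' j, Box n α i j → Box n α i' j → i' < i →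
      swapCols F t C i j < swapCols F t C i' j →
      Box n α i' (j + 1) ∧ swapCols F t C i j < swapCols F t C i' (j + 1)) :
    IsSSF n α (swapCols F t C) := by
  refine ⟨fun i j hb => ?_, fun i j hb => ?_, hrow, fun i j hb => ?_, ?_, hiv⟩
  · have := hF.eq_zero hb
    rcases swapCols_cases (F := F) (t := t) (C := C) i j with h | h | h <;> omega
  · have := hF.one_le hb
    rcases swapCols_cases (F := F) (t := t) (C := C) i j with h | h | h <;> omega
  · have := hF.le_row hb
    rcases swapCols_cases (F := F) (t := t) (C := C) i j with h | ⟨hc, hv, hG⟩ | h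
    · omega
    · have := hflag i j hc hv
      omega
    · omega
  · intro i i' j hb hb' hne heq
    refine hne (hF.row_eq hb hb' ?_)
    by_cases hc : j ∈ C
    · rwa [swapCols_apply_of_mem hc, swapCols_apply_of_mem hc, Equiv.apply_eq_iff_eq] at heq
    · rwa [swapCols_apply_of_notMem hc, swapCols_apply_of_notMem hc] at heq

theorem freeT_swapCols_iff {i j : ℕ} (hj : j ∉ C)
    (hpair : ∀ i' j', PseudoFreePair n α (swapCols F t C) t i j i' j' ↔
      PseudoFreePair n α F t i j i' j') :
    FreeT n α (swapCols F t C) t i j ↔ FreeT n α F t i j := by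
  simp only [FreeT, swapCols_apply_of_notMem hj, colContains_swapCols_of_notMem hj, hpair]

theorem freeTp1_swapCols_iff {i j : ℕ} (hj : j ∉ C)
    (hpair : ∀ i₀ j₀, PseudoFreePair n α (swapCols F t C) t i₀ j₀ i j ↔
      PseudoFreePair n α F t i₀ j₀ i j) :
    FreeTp1 n α (swapCols F t C) t i j ↔ FreeTp1 n α F t i j := by
  simp only [FreeTp1, swapCols_apply_of_notMem hj, colContains_swapCols_of_notMem hj, hpair]

end SwapCols

section Raise

/-- The columns `k < j₀` whose exchange accompanies raising the free `t` at `(r, j₀)`. -/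
def raiseCols (n : ℕ) (α : ℕ → ℕ) (F : ℕ → ℕ → ℕ) (t r j₀ : ℕ) : Set ℕ :=
  {k | k < j₀ ∧ ∀ m, k ≤ m → m < j₀ → F r m = t ∧ ∃ i, r < i ∧ Box n α i m ∧ F i m = t + 1}

/-- `R_{r,t}` applied at the free `t` in column `j₀` of row `r`. -/
def raiseAt (n : ℕ) (α : ℕ → ℕ) (F : ℕ → ℕ → ℕ) (t r j₀ : ℕ) : ℕ → ℕ → ℕ :=
  swapCols F t (insert j₀ (raiseCols n α F t r j₀))

variable {n : ℕ} {α : ℕ → ℕ} {F : ℕ → ℕ → ℕ} {t r j₀ : ℕ}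

theorem Rop_eq_raiseAt (hF : IsSSF n α F) (hne : {j | FreeT n α F t r j}.Nonempty) :
    Rop n α r t F = raiseAt n α F t r (sInf {j | FreeT n α F t r j}) := by
  have hfree : FreeT n α F t r (sInf {j | FreeT n α F t r j}) := Nat.sInf_mem hne
  rw [Rop, if_pos hne]
  generalize sInf {j | FreeT n α F t r j} = j₀ at hfree ⊢
  obtain ⟨hb₀, hv₀, hnc₀, -⟩ := hfree
  funext i c
  unfold raiseAt
  split_ifs with h1 h2 h3
  · obtain ⟨rfl, rfl⟩ := h1
    rw [swapCols_apply_of_mem (Set.mem_insert _ _), hv₀, Equiv.swap_apply_left]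
  · rw [swapCols_apply_of_mem (Set.mem_insert_of_mem _ (show c ∈ raiseCols n α F t r j₀ from h2.1)),
      h2.2, Equiv.swap_apply_left]
  · rw [swapCols_apply_of_mem (Set.mem_insert_of_mem _ (show c ∈ raiseCols n α F t r j₀ from h3.1)),
      h3.2, Equiv.swap_apply_right]
  by_cases hS : c ∈ raiseCols n α F t r j₀
  · rw [swapCols_apply_of_mem (Set.mem_insert_of_mem _ hS),
      Equiv.swap_apply_of_ne_of_ne (fun h => h2 ⟨hS, h⟩) (fun h => h3 ⟨hS, h⟩)]
  by_cases hc : c = j₀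
  · subst hc
    have hi : i ≠ r := fun h => h1 ⟨h, rfl⟩
    have := hF.one_le hb₀
    rw [swapCols_apply_of_mem (Set.mem_insert _ _)]
    by_cases hb : Box n α i c
    · exact (Equiv.swap_apply_of_ne_of_ne (fun h => hi (hF.row_eq hb hb₀ (h.trans hv₀.symm)))
        (fun h => hnc₀ ⟨i, hb, h⟩)).symm
    · rw [hF.eq_zero hb, Equiv.swap_apply_of_ne_of_ne (by omega) (by omega)]
  · rw [swapCols_apply_of_notMem (by simp [hc, hS])]

variable {k m : ℕ}

theorem raiseCols_spec (hk : k ∈ raiseCols n α F t r j₀) :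
    F r k = t ∧ ∃ i, r < i ∧ Box n α i k ∧ F i k = t + 1 :=
  hk.2 k le_rfl hk.1

theorem mem_raise_of_le (hk : k = j₀ ∨ k ∈ raiseCols n α F t r j₀) (hkm : k ≤ m) (hm : m ≤ j₀) :
    m = j₀ ∨ m ∈ raiseCols n α F t r j₀ := by
  rcases hm.eq_or_lt with rfl | hm
  · exact Or.inl rfl
  rcases hk with rfl | hk
  · omega
  exact Or.inr ⟨hm, fun m' h1 h2 => hk.2 m' (hkm.trans h1) h2⟩

theorem FreeT.one_le (hF : IsSSF n α F) (hfree : FreeT n α F t r j₀) : 1 ≤ t :=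
  hfree.2.1 ▸ hF.one_le hfree.1

section RaiseFacts

theorem eq_of_mem_raise (hfree : FreeT n α F t r j₀)
    (hc : k = j₀ ∨ k ∈ raiseCols n α F t r j₀) : F r k = t := by
  rcases hc with rfl | hc
  · exact hfree.2.1
  · exact (raiseCols_spec hc).1

theorem raiseAt_of_mem (hfree : FreeT n α F t r j₀) (hc : k = j₀ ∨ k ∈ raiseCols n α F t r j₀) :
    raiseAt n α F t r j₀ r k = t + 1 := by
  rw [raiseAt, swapCols_apply_of_mem hc, eq_of_mem_raise hfree hc, Equiv.swap_apply_left]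

theorem lt_row_of_mem_raiseCols (hF : IsSSF n α F) {i : ℕ} (hc : k ∈ raiseCols n α F t r j₀)
    (hb : Box n α i k) (hv : F i k = t + 1) : r < i := by
  obtain ⟨w, hwr, hwb, hwv⟩ := (raiseCols_spec hc).2
  exact hF.row_eq hb hwb (hv.trans hwv.symm) ▸ hwr

variable (hF : IsSSF n α F) (hfree : FreeT n α F t r j₀)
include hF hfree

theorem box_of_mem_raise (hc : k = j₀ ∨ k ∈ raiseCols n α F t r j₀) : Box n α r k := by
  have := eq_of_mem_raise hfree hc
  have := hfree.one_le hF
  exact hF.box_of_ne_zero (by omega)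

theorem row_eq_of_mem_raise {i : ℕ} (hc : k = j₀ ∨ k ∈ raiseCols n α F t r j₀)
    (hb : Box n α i k) (hv : F i k = t) : i = r :=
  hF.row_eq hb (box_of_mem_raise hF hfree hc) (hv.trans (eq_of_mem_raise hfree hc).symm)

/-- Every cell is fixed, raised (the `t`'s of row `r` in the exchanged columns) or lowered
(the `t + 1`'s below them). -/
theorem raiseAt_cases (i c : ℕ) :
    (raiseAt n α F t r j₀ i c = F i c ∧ ¬(i = r ∧ (c = j₀ ∨ c ∈ raiseCols n α F t r j₀)) ∧
      ¬(c ∈ raiseCols n α F t r j₀ ∧ F i c = t + 1)) ∨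
    (i = r ∧ (c = j₀ ∨ c ∈ raiseCols n α F t r j₀) ∧ F i c = t ∧
      raiseAt n α F t r j₀ i c = t + 1) ∨
    (r < i ∧ c ∈ raiseCols n α F t r j₀ ∧ F i c = t + 1 ∧ raiseAt n α F t r j₀ i c = t) := by
  have := hfree.one_le hF
  rcases swapCols_cases (F := F) (t := t) (C := insert j₀ (raiseCols n α F t r j₀)) i c with
    ⟨hG, hC⟩ | ⟨hc, hv, hG⟩ | ⟨hc, hv, hG⟩
  · refine Or.inl ⟨hG, fun ⟨hi, hc⟩ => (hC hc).1 (hi ▸ eq_of_mem_raise hfree hc),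
      fun ⟨hc, hv⟩ => (hC (Or.inr hc)).2 hv⟩
  · have hb : Box n α i c := hF.box_of_ne_zero (by omega)
    exact Or.inr (Or.inl ⟨row_eq_of_mem_raise hF hfree hc hb hv, hc, hv, hG⟩)
  · have hb : Box n α i c := hF.box_of_ne_zero (by omega)
    have hS : c ∈ raiseCols n α F t r j₀ :=
      hc.resolve_left (by rintro rfl; exact hfree.2.2.1 ⟨i, hb, hv⟩)
    exact Or.inr (Or.inr ⟨lt_row_of_mem_raiseCols hF hS hb hv, hS, hv, hG⟩)

theorem ne_of_succ_mem_raise {i : ℕ} (hk : 1 ≤ k)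
    (hC : k + 1 = j₀ ∨ k + 1 ∈ raiseCols n α F t r j₀) (hri : r < i) (hb : Box n α i k) :
    F i k ≠ t := by
  intro hv
  have hbr1 := box_of_mem_raise hF hfree hC
  have hvr1 := eq_of_mem_raise hfree hC
  have hbr : Box n α r k := hbr1.of_le hk (by omega)
  have hge := hF.succ_le hk hbr1
  have hne : F r k ≠ t := fun he => absurd (hF.row_eq hb hbr (hv.trans he.symm)) hri.ne'
  have := (hF.lt_succ hb hbr hri (by omega)).2
  omega

/-- The run of exchanged columns ends on the left at an entry larger than `t`: an entry `t`
there would be a free `t` left of `j₀`, or pseudo-free with a partner that cannot exist. -/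
theorem succ_le_of_succ_mem_raise (hmin : ∀ j, FreeT n α F t r j → j₀ ≤ j) (hk : 1 ≤ k)
    (hC : k + 1 = j₀ ∨ k + 1 ∈ raiseCols n α F t r j₀) (hS : k ∉ raiseCols n α F t r j₀)
    (hb : Box n α r k) : t + 1 ≤ F r k := by
  have hkj : k < j₀ := by
    rcases hC with h | h
    · omega
    · exact (Nat.lt_succ_self k).trans h.1
  have hge : t ≤ F r k :=
    eq_of_mem_raise hfree hC ▸ hF.succ_le hk (box_of_mem_raise hF hfree hC)
  refine lt_of_le_of_ne hge (fun he => ?_)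
  have hbelow : ∀ i, r < i → Box n α i k → F i k ≠ t + 1 := by
    refine fun i hi hbi hv => hS ⟨hkj, fun m h1 h2 => ?_⟩
    rcases h1.eq_or_lt with rfl | h1
    · exact ⟨he.symm, i, hi, hbi, hv⟩
    · exact raiseCols_spec ((mem_raise_of_le hC h1 h2.le).resolve_left h2.ne)
  by_cases hW : ColContains n α F k (t + 1)
  · obtain ⟨i', hb', hv'⟩ := hW
    have hi' : i' < r := (lt_or_gt_of_ne (show i' ≠ r by rintro rfl; omega)).resolve_right
      (fun h => hbelow i' h hb' hv')
    obtain ⟨hb1, hlt⟩ := hF.lt_succ hb hb' hi' (by omega)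
    have := hF.succ_le hk hb1
    rcases hC with hC | hC
    · exact hfree.2.2.1 ⟨i', hC ▸ hb1, by rw [← hC]; omega⟩
    · exact absurd (lt_row_of_mem_raiseCols hF hC hb1 (by omega)) (by omega)
  · obtain ⟨i', j', -, -, -, -, -, hncj', -, hkj', hint⟩ :
        ∃ i' j', PseudoFreePair n α F t r k i' j' := by
      by_contra hno
      exact absurd (hmin k ⟨hb, he.symm, hW, hno⟩) (by omega)
    rcases Nat.lt_trichotomy j' j₀ with h | rfl | h
    · have hj' := mem_raise_of_le hC hkj' h.le
      exact hncj' ⟨r, box_of_mem_raise hF hfree hj', eq_of_mem_raise hfree hj'⟩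
    · exact hncj' ⟨r, hfree.1, hfree.2.1⟩
    · exact hfree.2.2.1 (hint j₀ hkj h).2

end RaiseFacts

end Raise

section RaiseSSF

variable {n : ℕ} {α : ℕ → ℕ} {F : ℕ → ℕ → ℕ} {t r j₀ : ℕ}
  (hF : IsSSF n α F) (hfree : FreeT n α F t r j₀)
include hF hfree

theorem raiseAt_succ_le (hmin : ∀ j, FreeT n α F t r j → j₀ ≤ j) {i j : ℕ} (hj : 1 ≤ j)
    (hb : Box n α i (j + 1)) : raiseAt n α F t r j₀ i (j + 1) ≤ raiseAt n α F t r j₀ i j := by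
  have hrow := hF.succ_le hj hb
  rcases raiseAt_cases hF hfree i (j + 1) with ⟨h1, hn1, hw1⟩ | ⟨hi1, hC1, hv1, h1⟩ |
      ⟨hr1, hS1, hv1, h1⟩ <;>
    rcases raiseAt_cases hF hfree i j with ⟨h0, hn0, hw0⟩ | ⟨hi0, hC0, hv0, h0⟩ |
      ⟨hr0, hS0, hv0, h0⟩
  · rw [h1, h0]
    exact hrow
  · rw [h1, h0]
    omega
  · have : F i (j + 1) ≠ t + 1 := by
      intro he
      rcases mem_raise_of_le (Or.inr hS0) j.le_succ hS0.1 with hc | hc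
      · exact hfree.2.2.1 ⟨i, hc ▸ hb, hc ▸ he⟩
      · exact hw1 ⟨hc, he⟩
    rw [h1, h0]
    omega
  · have hS : j ∉ raiseCols n α F t r j₀ := fun hS => hn0 ⟨hi1, Or.inr hS⟩
    have := succ_le_of_succ_mem_raise hF hfree hmin hj hC1 hS (hi1 ▸ hb.of_le hj j.le_succ)
    rw [h1, h0, hi1]
    omega
  · rw [h1, h0]
  · omega
  · rw [h1, h0]
    omega
  · omega
  · rw [h1, h0]

theorem raiseAt_lt_succ_of_fixed {i i' j : ℕ} (hb : Box n α i j) (hb' : Box n α i' j)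
    (hii : i' < i) (hG' : raiseAt n α F t r j₀ i' j = F i' j)
    (hn' : ¬(i' = r ∧ (j = j₀ ∨ j ∈ raiseCols n α F t r j₀)))
    (hw' : ¬(j ∈ raiseCols n α F t r j₀ ∧ F i' j = t + 1))
    (hlt : raiseAt n α F t r j₀ i j < raiseAt n α F t r j₀ i' j) :
    Box n α i' (j + 1) ∧ raiseAt n α F t r j₀ i j < raiseAt n α F t r j₀ i' (j + 1) := by
  rw [hG'] at hlt
  rcases raiseAt_cases hF hfree i j with ⟨h0, -, -⟩ | ⟨hi0, hC0, hv0, h0⟩ | ⟨-, hS0, hv0, h0⟩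
  · rw [h0] at hlt ⊢
    obtain ⟨hbx, hlt2⟩ := hF.lt_succ hb hb' hii hlt
    refine ⟨hbx, ?_⟩
    rcases raiseAt_cases hF hfree i' (j + 1) with ⟨h1, -, -⟩ | ⟨-, -, hv1, h1⟩ |
        ⟨hr1, hS1, hv1, h1⟩
    · rwa [h1]
    · omega
    · have := ne_of_succ_mem_raise hF hfree hb.2.2.1 (Or.inr hS1) (hr1.trans hii) hb
      omega
  · have hi'r : i' < r := hi0 ▸ hii
    obtain ⟨hbx, hlt2⟩ := hF.lt_succ hb hb' hii (by omega)
    refine ⟨hbx, ?_⟩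
    have hne : F i' (j + 1) ≠ t + 1 := by
      intro he
      rcases hC0 with rfl | hS0
      · exact hfree.ne_succ_of_above_right hF hi'r (by omega) hbx
          (fun m h1 h2 => absurd h2 (by omega)) he
      · rcases mem_raise_of_le (Or.inr hS0) j.le_succ hS0.1 with hc | hc
        · exact hfree.2.2.1 ⟨i', hc ▸ hbx, hc ▸ he⟩
        · exact absurd (lt_row_of_mem_raiseCols hF hc hbx he) (by omega)
    rcases raiseAt_cases hF hfree i' (j + 1) with ⟨h1, -, -⟩ | ⟨hi1, -, -, -⟩ | ⟨hr1, -, -, -⟩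
    · rw [h1]
      omega
    · omega
    · omega
  · have h3 : F i' j ≠ t + 1 := fun he => hw' ⟨hS0, he⟩
    have h4 : F i' j ≠ t := fun he =>
      hn' ⟨row_eq_of_mem_raise hF hfree (Or.inr hS0) hb' he, Or.inr hS0⟩
    obtain ⟨hbx, hlt2⟩ := hF.lt_succ hb hb' hii (by omega)
    refine ⟨hbx, ?_⟩
    rcases raiseAt_cases hF hfree i' (j + 1) with ⟨h1, -, -⟩ | ⟨-, -, -, h1⟩ | ⟨-, -, hv1, -⟩ <;>
      omega

theorem raiseAt_lt_succ_of_raised {i j : ℕ} (hb : Box n α i j) (hri : r < i)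
    (hC : j = j₀ ∨ j ∈ raiseCols n α F t r j₀)
    (hlt : raiseAt n α F t r j₀ i j < raiseAt n α F t r j₀ r j) :
    Box n α r (j + 1) ∧ raiseAt n α F t r j₀ i j < raiseAt n α F t r j₀ r (j + 1) := by
  rw [raiseAt_of_mem hfree hC] at hlt
  rcases hC with rfl | hS
  · have h0 : raiseAt n α F t r j i j = F i j := by
      rcases raiseAt_cases hF hfree i j with ⟨h0, -, -⟩ | ⟨hi0, -, -, -⟩ | ⟨-, hS0, -, -⟩
      · exact h0
      · omega
      · exact absurd hS0.1 (lt_irrefl _)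
    have hne : F i j ≠ t := fun he =>
      absurd (row_eq_of_mem_raise hF hfree (Or.inl rfl) hb he) hri.ne'
    obtain ⟨hbx, hlt2⟩ := hF.lt_succ hb hfree.1 hri (by rw [hfree.2.1]; omega)
    refine ⟨hbx, ?_⟩
    rw [h0, raiseAt, swapCols_apply_of_notMem]
    · exact hlt2
    · rintro (h | h)
      · omega
      · exact absurd h.1 (by omega)
  · have hC1 := mem_raise_of_le (Or.inr hS) j.le_succ hS.1
    exact ⟨box_of_mem_raise hF hfree hC1, by rwa [raiseAt_of_mem hfree hC1]⟩

theorem raiseAt_lt_succ_of_lowered {i i' j : ℕ} (hb : Box n α i j) (hb' : Box n α i' j)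
    (hii : i' < i) (hr : r < i') (hv' : F i' j = t + 1) (hG' : raiseAt n α F t r j₀ i' j = t)
    (hlt : raiseAt n α F t r j₀ i j < raiseAt n α F t r j₀ i' j) :
    Box n α i' (j + 1) ∧ raiseAt n α F t r j₀ i j < raiseAt n α F t r j₀ i' (j + 1) := by
  rw [hG'] at hlt
  have h0 : raiseAt n α F t r j₀ i j = F i j := by
    rcases raiseAt_cases hF hfree i j with ⟨h0, -, -⟩ | ⟨hi0, -, -, -⟩ | ⟨-, -, -, h0⟩
    · exact h0
    · omega
    · omega
  rw [h0] at hlt ⊢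
  obtain ⟨hbx, hlt2⟩ := hF.lt_succ hb hb' hii (by omega)
  refine ⟨hbx, ?_⟩
  rcases raiseAt_cases hF hfree i' (j + 1) with ⟨h1, -, -⟩ | ⟨hi1, -, -, -⟩ | ⟨-, -, -, h1⟩ <;>
    omega

theorem IsSSF.raiseAt (htr : t < r) (hmin : ∀ j, FreeT n α F t r j → j₀ ≤ j) :
    IsSSF n α (raiseAt n α F t r j₀) := by
  have := hfree.one_le hF
  refine hF.swapCols this (fun i c hc hv => ?_)
    (fun i j hj hb => raiseAt_succ_le hF hfree hmin hj hb) (fun i i' j hb hb' hii hlt => ?_)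
  · exact row_eq_of_mem_raise hF hfree hc (hF.box_of_ne_zero (by omega)) hv ▸ htr
  · rcases raiseAt_cases hF hfree i' j with ⟨hG', hn', hw'⟩ | ⟨hi', hC', -, -⟩ |
        ⟨hr', -, hv', hG'⟩
    · exact raiseAt_lt_succ_of_fixed hF hfree hb hb' hii hG' hn' hw' hlt
    · rw [hi'] at hlt ⊢
      exact raiseAt_lt_succ_of_raised hF hfree hb (hi' ▸ hii) hC' hlt
    · exact raiseAt_lt_succ_of_lowered hF hfree hb hb' hii hr' hv' hG' hlt

end RaiseSSF

section RaiseFree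

variable {n : ℕ} {α : ℕ → ℕ} {F : ℕ → ℕ → ℕ} {t r j₀ : ℕ}

theorem not_colContains_raiseAt (hfree : FreeT n α F t r j₀) :
    ¬ ColContains n α (raiseAt n α F t r j₀) j₀ t := by
  rw [raiseAt, colContains_swapCols_of_mem (Set.mem_insert _ _), Equiv.swap_apply_left]
  exact hfree.2.2.1

variable (hF : IsSSF n α F) (hfree : FreeT n α F t r j₀)
include hF hfree

theorem colContains_raiseAt_iff {c v : ℕ} (hc : c ≠ j₀) :
    ColContains n α (raiseAt n α F t r j₀) c v ↔ ColContains n α F c v := by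
  refine colContains_swapCols (fun hC => ?_)
  have hS : c ∈ raiseCols n α F t r j₀ := hC.resolve_left hc
  obtain ⟨w, -, hwb, hwv⟩ := (raiseCols_spec hS).2
  exact ⟨⟨r, box_of_mem_raise hF hfree (Or.inr hS), (raiseCols_spec hS).1⟩, ⟨w, hwb, hwv⟩⟩

theorem colContains_raiseAt_succ {c : ℕ} (hc : c = j₀ ∨ c ∈ raiseCols n α F t r j₀) :
    ColContains n α (raiseAt n α F t r j₀) c (t + 1) :=
  ⟨r, box_of_mem_raise hF hfree hc, raiseAt_of_mem hfree hc⟩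

theorem colContains_raiseAt_of_mem_raiseCols {c : ℕ} (hS : c ∈ raiseCols n α F t r j₀) :
    ColContains n α (raiseAt n α F t r j₀) c t :=
  (colContains_raiseAt_iff hF hfree (ne_of_lt hS.1)).2
    ⟨r, box_of_mem_raise hF hfree (Or.inr hS), (raiseCols_spec hS).1⟩

theorem pseudoFreePair_of_raiseAt {i j i' j' : ℕ}
    (hp : PseudoFreePair n α (raiseAt n α F t r j₀) t i j i' j') :
    PseudoFreePair n α F t i j i' j' := by
  obtain ⟨hbi, hvi, hnci, hbi', hvi', hnci', hii, hjj, hint⟩ := hp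
  have hj : j ∉ insert j₀ (raiseCols n α F t r j₀) := fun hC =>
    hnci (colContains_raiseAt_succ hF hfree hC)
  rw [raiseAt, swapCols_apply_of_notMem hj] at hvi
  have hj' : j' ≠ j₀ := by
    rintro rfl
    refine hF.ne_of_below_left hfree.1 hfree.2.1 (fun k h1 h2 => ?_) hbi ?_ hjj hvi
    · exact (colContains_raiseAt_iff hF hfree h2.ne).1 (hint k h1 h2).1
    · have : raiseAt n α F t r j' i' j' = t + 1 := hvi'
      rcases raiseAt_cases hF hfree i' j' with ⟨h, -⟩ | ⟨rfl, -⟩ | ⟨-, hS, -⟩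
      · exact (hfree.2.2.1 ⟨i', hbi', h ▸ this⟩).elim
      · exact hii
      · exact absurd hS.1 (lt_irrefl _)
  have hj'C : j' ∉ insert j₀ (raiseCols n α F t r j₀) := fun hC =>
    hnci' (colContains_raiseAt_of_mem_raiseCols hF hfree (hC.resolve_left hj'))
  rw [raiseAt, swapCols_apply_of_notMem hj'C] at hvi'
  refine ⟨hbi, hvi, fun h => hnci ((colContains_raiseAt_iff hF hfree fun h' => hj (Or.inl h')).2 h),
    hbi', hvi', fun h => hnci' ((colContains_raiseAt_iff hF hfree hj').2 h), hii, hjj,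
    fun k h1 h2 => ?_⟩
  have hk : k ≠ j₀ := by
    rintro rfl
    exact not_colContains_raiseAt hfree (hint k h1 h2).1
  exact ⟨(colContains_raiseAt_iff hF hfree hk).1 (hint k h1 h2).1,
    (colContains_raiseAt_iff hF hfree hk).1 (hint k h1 h2).2⟩

theorem pseudoFreePair_raiseAt {i j i' j' : ℕ} (hp : PseudoFreePair n α F t i j i' j') :
    PseudoFreePair n α (raiseAt n α F t r j₀) t i j i' j' := by
  obtain ⟨hbi, hvi, hnci, hbi', hvi', hnci', hii, hjj, hint⟩ := hp
  have hj : j ∉ insert j₀ (raiseCols n α F t r j₀) := by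
    rintro (rfl | hS)
    · have hir := row_eq_of_mem_raise hF hfree (Or.inl rfl) hbi hvi
      exact hfree.2.2.2
        ⟨i', j', hfree.1, hfree.2.1, hfree.2.2.1, hbi', hvi', hnci', hir ▸ hii, hjj, hint⟩
    · obtain ⟨w, -, hwb, hwv⟩ := (raiseCols_spec hS).2
      exact hnci ⟨w, hwb, hwv⟩
  have hj' : j' ∉ insert j₀ (raiseCols n α F t r j₀) := by
    rintro (rfl | hS)
    · exact hfree.2.2.1 ⟨i', hbi', hvi'⟩
    · exact hnci' ⟨r, box_of_mem_raise hF hfree (Or.inr hS), (raiseCols_spec hS).1⟩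
  have hne : j ≠ j₀ := fun h => hj (Or.inl h)
  have hne' : j' ≠ j₀ := fun h => hj' (Or.inl h)
  refine ⟨hbi, by rwa [raiseAt, swapCols_apply_of_notMem hj],
    fun h => hnci ((colContains_raiseAt_iff hF hfree hne).1 h), hbi',
    by rwa [raiseAt, swapCols_apply_of_notMem hj'],
    fun h => hnci' ((colContains_raiseAt_iff hF hfree hne').1 h), hii, hjj, fun k h1 h2 => ?_⟩
  have hk : k ≠ j₀ := by
    rintro rfl
    exact hfree.2.2.1 (hint k h1 h2).2
  exact ⟨(colContains_raiseAt_iff hF hfree hk).2 (hint k h1 h2).1,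
    (colContains_raiseAt_iff hF hfree hk).2 (hint k h1 h2).2⟩

theorem pseudoFreePair_raiseAt_iff {i j i' j' : ℕ} :
    PseudoFreePair n α (raiseAt n α F t r j₀) t i j i' j' ↔ PseudoFreePair n α F t i j i' j' :=
  ⟨pseudoFreePair_of_raiseAt hF hfree, pseudoFreePair_raiseAt hF hfree⟩

theorem freeT_raiseAt_iff (i j : ℕ) :
    FreeT n α (raiseAt n α F t r j₀) t i j ↔ FreeT n α F t i j ∧ ¬(i = r ∧ j = j₀) := by
  by_cases hC : j ∈ insert j₀ (raiseCols n α F t r j₀)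
  · refine iff_of_false (fun h => h.2.2.1 (colContains_raiseAt_succ hF hfree hC))
      (fun ⟨h, hne⟩ => ?_)
    rcases hC with rfl | hS
    · exact hne ⟨row_eq_of_mem_raise hF hfree (Or.inl rfl) h.1 h.2.1, rfl⟩
    · obtain ⟨w, -, hwb, hwv⟩ := (raiseCols_spec hS).2
      exact h.2.2.1 ⟨w, hwb, hwv⟩
  · rw [raiseAt, freeT_swapCols_iff hC (fun _ _ => pseudoFreePair_raiseAt_iff hF hfree)]
    exact (and_iff_left (fun h => hC (Or.inl h.2))).symm

theorem freeTp1_raiseAt_iff (i j : ℕ) :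
    FreeTp1 n α (raiseAt n α F t r j₀) t i j ↔ FreeTp1 n α F t i j ∨ (i = r ∧ j = j₀) := by
  by_cases hj : j = j₀
  · rw [hj, or_iff_right (fun h => h.2.2.1 ⟨r, hfree.1, hfree.2.1⟩), and_iff_left rfl]
    constructor
    · intro h
      rcases raiseAt_cases hF hfree i j₀ with ⟨hG, -⟩ | ⟨hi, -⟩ | ⟨-, hS, -⟩
      · exact (hfree.2.2.1 ⟨i, h.1, hG ▸ h.2.1⟩).elim
      · exact hi
      · exact absurd hS.1 (lt_irrefl _)
    · rintro rfl
      refine ⟨hfree.1, raiseAt_of_mem hfree (Or.inl rfl), not_colContains_raiseAt hfree, ?_⟩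
      rintro ⟨i₀, k₀, hp⟩
      have := ((pseudoFreePair_raiseAt_iff hF hfree).1 hp).2.2.2.2.1
      have := hfree.2.1
      omega
  by_cases hS : j ∈ raiseCols n α F t r j₀
  · refine iff_of_false (fun h => h.2.2.1 (colContains_raiseAt_of_mem_raiseCols hF hfree hS)) ?_
    rintro (h | ⟨-, h⟩)
    · exact h.2.2.1 ⟨r, box_of_mem_raise hF hfree (Or.inr hS), (raiseCols_spec hS).1⟩
    · exact hj h
  · have hC : j ∉ insert j₀ (raiseCols n α F t r j₀) := by
      rintro (h | h)
      · exact hj h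
      · exact hS h
    rw [raiseAt, freeTp1_swapCols_iff hC (fun _ _ => pseudoFreePair_raiseAt_iff hF hfree)]
    exact (or_iff_left (fun h => hj h.2)).symm

end RaiseFree

theorem Rop_spec {n : ℕ} {α : ℕ → ℕ} {F : ℕ → ℕ → ℕ} {t r : ℕ} (hF : IsSSF n α F) (htr : t < r)
    (hne : {j | FreeT n α F t r j}.Nonempty) :
    IsSSF n α (Rop n α r t F) ∧ ∃ j₀, FreeT n α F t r j₀ ∧ ∀ i j,
      (FreeT n α (Rop n α r t F) t i j ↔ FreeT n α F t i j ∧ ¬(i = r ∧ j = j₀)) ∧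
      (FreeTp1 n α (Rop n α r t F) t i j ↔ FreeTp1 n α F t i j ∨ (i = r ∧ j = j₀)) := by
  have hfree : FreeT n α F t r (sInf {j | FreeT n α F t r j}) := Nat.sInf_mem hne
  rw [Rop_eq_raiseAt hF hne]
  exact ⟨hF.raiseAt hfree htr (fun j hj => Nat.sInf_le hj), _, hfree,
    fun i j => ⟨freeT_raiseAt_iff hF hfree i j, freeTp1_raiseAt_iff hF hfree i j⟩⟩

section Lower

/-- The columns `k < j₀` whose exchange accompanies lowering the free `t + 1` at `(r, j₀)`. -/
def lowerCols (n : ℕ) (α : ℕ → ℕ) (F : ℕ → ℕ → ℕ) (t r j₀ : ℕ) : Set ℕ :=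
  {k | k < j₀ ∧ ∀ m, k ≤ m → m < j₀ → F r m = t + 1 ∧ ∃ i, r < i ∧ Box n α i m ∧ F i m = t}

/-- `L_{r,t}` applied at the free `t + 1` in column `j₀` of row `r`. -/
def lowerAt (n : ℕ) (α : ℕ → ℕ) (F : ℕ → ℕ → ℕ) (t r j₀ : ℕ) : ℕ → ℕ → ℕ :=
  swapCols F t (insert j₀ (lowerCols n α F t r j₀))

variable {n : ℕ} {α : ℕ → ℕ} {F : ℕ → ℕ → ℕ} {t r j₀ : ℕ}

theorem Lop_eq_lowerAt (hF : IsSSF n α F) (ht : 1 ≤ t)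
    (hne : {j | FreeTp1 n α F t r j}.Nonempty) :
    Lop n α r t F = lowerAt n α F t r (sSup {j | FreeTp1 n α F t r j}) := by
  have hfree : FreeTp1 n α F t r (sSup {j | FreeTp1 n α F t r j}) :=
    Nat.sSup_mem hne ⟨α r, fun j hj => hj.1.2.2.2⟩
  rw [Lop, if_pos hne]
  generalize sSup {j | FreeTp1 n α F t r j} = j₀ at hfree ⊢
  obtain ⟨hb₀, hv₀, hnc₀, -⟩ := hfree
  funext i c
  unfold lowerAt
  split_ifs with h1 h2 h3
  · obtain ⟨rfl, rfl⟩ := h1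
    rw [swapCols_apply_of_mem (Set.mem_insert _ _), hv₀, Equiv.swap_apply_right]
  · rw [swapCols_apply_of_mem (Set.mem_insert_of_mem _ (show c ∈ lowerCols n α F t r j₀ from h2.1)),
      h2.2, Equiv.swap_apply_left]
  · rw [swapCols_apply_of_mem (Set.mem_insert_of_mem _ (show c ∈ lowerCols n α F t r j₀ from h3.1)),
      h3.2, Equiv.swap_apply_right]
  by_cases hS : c ∈ lowerCols n α F t r j₀
  · rw [swapCols_apply_of_mem (Set.mem_insert_of_mem _ hS),
      Equiv.swap_apply_of_ne_of_ne (fun h => h2 ⟨hS, h⟩) (fun h => h3 ⟨hS, h⟩)]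
  by_cases hc : c = j₀
  · subst hc
    have hi : i ≠ r := fun h => h1 ⟨h, rfl⟩
    rw [swapCols_apply_of_mem (Set.mem_insert _ _)]
    by_cases hb : Box n α i c
    · exact (Equiv.swap_apply_of_ne_of_ne (fun h => hnc₀ ⟨i, hb, h⟩)
        (fun h => hi (hF.row_eq hb hb₀ (h.trans hv₀.symm)))).symm
    · rw [hF.eq_zero hb, Equiv.swap_apply_of_ne_of_ne (by omega) (by omega)]
  · rw [swapCols_apply_of_notMem (by simp [hc, hS])]

variable {k m : ℕ}

theorem lowerCols_spec (hk : k ∈ lowerCols n α F t r j₀) :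
    F r k = t + 1 ∧ ∃ i, r < i ∧ Box n α i k ∧ F i k = t :=
  hk.2 k le_rfl hk.1

theorem mem_lower_of_le (hk : k = j₀ ∨ k ∈ lowerCols n α F t r j₀) (hkm : k ≤ m) (hm : m ≤ j₀) :
    m = j₀ ∨ m ∈ lowerCols n α F t r j₀ := by
  rcases hm.eq_or_lt with rfl | hm
  · exact Or.inl rfl
  rcases hk with rfl | hk
  · omega
  exact Or.inr ⟨hm, fun m' h1 h2 => hk.2 m' (hkm.trans h1) h2⟩

section LowerFacts

theorem eq_of_mem_lower (hfree : FreeTp1 n α F t r j₀)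
    (hc : k = j₀ ∨ k ∈ lowerCols n α F t r j₀) : F r k = t + 1 := by
  rcases hc with rfl | hc
  · exact hfree.2.1
  · exact (lowerCols_spec hc).1

theorem lowerAt_of_mem (hfree : FreeTp1 n α F t r j₀)
    (hc : k = j₀ ∨ k ∈ lowerCols n α F t r j₀) : lowerAt n α F t r j₀ r k = t := by
  rw [lowerAt, swapCols_apply_of_mem hc, eq_of_mem_lower hfree hc, Equiv.swap_apply_right]

theorem lt_row_of_mem_lowerCols (hF : IsSSF n α F) {i : ℕ} (hc : k ∈ lowerCols n α F t r j₀)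
    (hb : Box n α i k) (hv : F i k = t) : r < i := by
  obtain ⟨w, hwr, hwb, hwv⟩ := (lowerCols_spec hc).2
  exact hF.row_eq hb hwb (hv.trans hwv.symm) ▸ hwr

theorem box_of_mem_lower (hF : IsSSF n α F) (hfree : FreeTp1 n α F t r j₀)
    (hc : k = j₀ ∨ k ∈ lowerCols n α F t r j₀) : Box n α r k :=
  hF.box_of_ne_zero (by rw [eq_of_mem_lower hfree hc]; omega)

theorem row_eq_of_mem_lower (hF : IsSSF n α F) (hfree : FreeTp1 n α F t r j₀) {i : ℕ}
    (hc : k = j₀ ∨ k ∈ lowerCols n α F t r j₀) (hb : Box n α i k) (hv : F i k = t + 1) :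
    i = r :=
  hF.row_eq hb (box_of_mem_lower hF hfree hc) (hv.trans (eq_of_mem_lower hfree hc).symm)

variable (hF : IsSSF n α F) (ht : 1 ≤ t) (hfree : FreeTp1 n α F t r j₀)
include hF ht hfree

/-- Every cell is fixed, lowered (the `t + 1`'s of row `r` in the exchanged columns) or raised
(the `t`'s below them). -/
theorem lowerAt_cases (i c : ℕ) :
    (lowerAt n α F t r j₀ i c = F i c ∧ ¬(i = r ∧ (c = j₀ ∨ c ∈ lowerCols n α F t r j₀)) ∧
      ¬(c ∈ lowerCols n α F t r j₀ ∧ F i c = t)) ∨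
    (i = r ∧ (c = j₀ ∨ c ∈ lowerCols n α F t r j₀) ∧ F i c = t + 1 ∧
      lowerAt n α F t r j₀ i c = t) ∨
    (r < i ∧ c ∈ lowerCols n α F t r j₀ ∧ F i c = t ∧ lowerAt n α F t r j₀ i c = t + 1) := by
  rcases swapCols_cases (F := F) (t := t) (C := insert j₀ (lowerCols n α F t r j₀)) i c with
    ⟨hG, hC⟩ | ⟨hc, hv, hG⟩ | ⟨hc, hv, hG⟩
  · refine Or.inl ⟨hG, fun ⟨hi, hc⟩ => (hC hc).2 (hi ▸ eq_of_mem_lower hfree hc),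
      fun ⟨hc, hv⟩ => (hC (Or.inr hc)).1 hv⟩
  · have hb : Box n α i c := hF.box_of_ne_zero (by omega)
    have hS : c ∈ lowerCols n α F t r j₀ :=
      hc.resolve_left (by rintro rfl; exact hfree.2.2.1 ⟨i, hb, hv⟩)
    exact Or.inr (Or.inr ⟨lt_row_of_mem_lowerCols hF hS hb hv, hS, hv, hG⟩)
  · have hb : Box n α i c := hF.box_of_ne_zero (by omega)
    exact Or.inr (Or.inl ⟨row_eq_of_mem_lower hF hfree hc hb hv, hc, hv, hG⟩)

end LowerFacts

/-- Left of the exchanged run no `t` lies below row `r`: it would either extend the run or,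
with the free `t + 1` at `(r, j₀)`, form a pseudo-free pair. -/
theorem ne_of_succ_mem_lower (hF : IsSSF n α F) (hfree : FreeTp1 n α F t r j₀) {i : ℕ}
    (hk : 1 ≤ k) (hC : k + 1 = j₀ ∨ k + 1 ∈ lowerCols n α F t r j₀)
    (hS : k ∉ lowerCols n α F t r j₀) (hri : r < i) (hb : Box n α i k) : F i k ≠ t := by
  intro hv
  have hkj : k < j₀ := by
    rcases hC with h | h
    · omega
    · exact (Nat.lt_succ_self k).trans h.1
  have hbr1 := box_of_mem_lower hF hfree hC
  have hvr1 := eq_of_mem_lower hfree hC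
  have hbr : Box n α r k := hbr1.of_le hk (by omega)
  have hge := hF.succ_le hk hbr1
  have hgt : t + 1 < F r k := by
    refine lt_of_le_of_ne (hvr1 ▸ hge) (fun he => hS ⟨hkj, fun m h1 h2 => ?_⟩)
    rcases h1.eq_or_lt with rfl | h1
    · exact ⟨he.symm, i, hri, hb, hv⟩
    · exact lowerCols_spec ((mem_lower_of_le hC h1 h2.le).resolve_left h2.ne)
  by_cases hW : ColContains n α F k (t + 1)
  · obtain ⟨u, hub, huv⟩ := hW
    rcases lt_or_ge u i with hu | hu
    · obtain ⟨hbx, hlt⟩ := hF.lt_succ hb hub hu (by omega)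
      have := hF.succ_le hk hbx
      have hur := row_eq_of_mem_lower hF hfree hC hbx (by omega)
      rw [hur] at huv
      omega
    · have := (hF.lt_succ hub hbr (by omega) (by omega)).2
      omega
  · refine hfree.2.2.2 ⟨i, k, hb, hv, hW, hfree.1, hfree.2.1, hfree.2.2.1, hri, hkj,
      fun m h1 h2 => ?_⟩
    have hm := (mem_lower_of_le hC h1 h2.le).resolve_left h2.ne
    obtain ⟨w, -, hwb, hwv⟩ := (lowerCols_spec hm).2
    exact ⟨⟨w, hwb, hwv⟩, ⟨r, box_of_mem_lower hF hfree (Or.inr hm), (lowerCols_spec hm).1⟩⟩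

end Lower

section LowerSSF

variable {n : ℕ} {α : ℕ → ℕ} {F : ℕ → ℕ → ℕ} {t r j₀ : ℕ}
  (hF : IsSSF n α F) (ht : 1 ≤ t) (hfree : FreeTp1 n α F t r j₀)
include hF ht hfree

theorem lowerAt_succ_le (hmax : ∀ j, FreeTp1 n α F t r j → j ≤ j₀) {i j : ℕ} (hj : 1 ≤ j)
    (hb : Box n α i (j + 1)) : lowerAt n α F t r j₀ i (j + 1) ≤ lowerAt n α F t r j₀ i j := by
  have hrow := hF.succ_le hj hb
  rcases lowerAt_cases hF ht hfree i (j + 1) with ⟨h1, hn1, -⟩ | ⟨-, -, hv1, h1⟩ |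
      ⟨hr1, hS1, hv1, h1⟩ <;>
    rcases lowerAt_cases hF ht hfree i j with ⟨h0, -, hw0⟩ | ⟨hi0, hC0, hv0, h0⟩ |
      ⟨hr0, -, hv0, h0⟩
  · rw [h1, h0]
    exact hrow
  · have : F i (j + 1) ≠ t + 1 := by
      intro he
      rcases hC0 with hj0 | hS0
      · exact hfree.ne_succ_of_right hF hmax (show j₀ < j + 1 by omega) (hi0 ▸ hb) (hi0 ▸ he)
      · exact hn1 ⟨hi0, mem_lower_of_le (Or.inr hS0) j.le_succ hS0.1⟩
    rw [h1, h0]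
    omega
  · rw [h1, h0]
    omega
  · rw [h1, h0]
    omega
  · rw [h1, h0]
  · omega
  · have : F i j ≠ t := fun he => ne_of_succ_mem_lower hF hfree hj (Or.inr hS1)
      (fun hS => hw0 ⟨hS, he⟩) hr1 (hb.of_le hj j.le_succ) he
    rw [h1, h0]
    omega
  · omega
  · rw [h1, h0]

theorem lowerAt_lt_succ_of_fixed {i i' j : ℕ} (hb : Box n α i j) (hb' : Box n α i' j)
    (hii : i' < i) (hG' : lowerAt n α F t r j₀ i' j = F i' j)
    (hn' : ¬(i' = r ∧ (j = j₀ ∨ j ∈ lowerCols n α F t r j₀)))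
    (hlt : lowerAt n α F t r j₀ i j < lowerAt n α F t r j₀ i' j) :
    Box n α i' (j + 1) ∧ lowerAt n α F t r j₀ i j < lowerAt n α F t r j₀ i' (j + 1) := by
  rw [hG'] at hlt
  rcases lowerAt_cases hF ht hfree i j with ⟨h0, -, -⟩ | ⟨hi0, hC0, hv0, h0⟩ | ⟨-, hS0, hv0, h0⟩
  · rw [h0] at hlt ⊢
    obtain ⟨hbx, hlt2⟩ := hF.lt_succ hb hb' hii hlt
    refine ⟨hbx, ?_⟩
    rcases lowerAt_cases hF ht hfree i' (j + 1) with ⟨h1, -, -⟩ | ⟨hi1, hC1, hv1, h1⟩ |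
        ⟨-, -, hv1, h1⟩
    · rwa [h1]
    · have hS : j ∉ lowerCols n α F t r j₀ := fun hS => hn' ⟨hi1, Or.inr hS⟩
      have := ne_of_succ_mem_lower hF hfree hb.2.2.1 hC1 hS (hi1 ▸ hii) hb
      omega
    · omega
  · have hi'r : i' < r := hi0 ▸ hii
    have hne : F i' j ≠ t + 1 := fun he =>
      absurd (row_eq_of_mem_lower hF hfree hC0 hb' he) hi'r.ne
    obtain ⟨hbx, hlt2⟩ := hF.lt_succ hb hb' hii (by omega)
    refine ⟨hbx, ?_⟩
    rcases lowerAt_cases hF ht hfree i' (j + 1) with ⟨h1, -, -⟩ | ⟨hi1, -⟩ | ⟨hr1, -⟩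
    · rw [h0, h1]
      omega
    · omega
    · omega
  · obtain ⟨hbx, hlt2⟩ := hF.lt_succ hb hb' hii (by omega)
    refine ⟨hbx, ?_⟩
    have hC1 := mem_lower_of_le (Or.inr hS0) j.le_succ hS0.1
    have hne : F i' (j + 1) ≠ t + 1 := fun he =>
      hn' ⟨row_eq_of_mem_lower hF hfree hC1 hbx he, Or.inr hS0⟩
    rcases lowerAt_cases hF ht hfree i' (j + 1) with ⟨h1, -, -⟩ | ⟨hi1, -⟩ | ⟨-, -, hv1, -⟩
    · rw [h0, h1]
      omega
    · exact absurd ⟨hi1, Or.inr hS0⟩ hn'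
    · omega

theorem lowerAt_lt_succ_of_lowered {i j : ℕ} (hb : Box n α i j) (hri : r < i)
    (hC : j = j₀ ∨ j ∈ lowerCols n α F t r j₀)
    (hlt : lowerAt n α F t r j₀ i j < lowerAt n α F t r j₀ r j) :
    Box n α r (j + 1) ∧ lowerAt n α F t r j₀ i j < lowerAt n α F t r j₀ r (j + 1) := by
  rw [lowerAt_of_mem hfree hC] at hlt
  have h0 : lowerAt n α F t r j₀ i j = F i j := by
    rcases lowerAt_cases hF ht hfree i j with ⟨h0, -, -⟩ | ⟨hi0, -⟩ | ⟨-, -, -, h0⟩ <;> omega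
  rw [h0] at hlt ⊢
  obtain ⟨hbx, hlt2⟩ := hF.lt_succ hb (box_of_mem_lower hF hfree hC) hri
    (by rw [eq_of_mem_lower hfree hC]; omega)
  refine ⟨hbx, ?_⟩
  rcases lowerAt_cases hF ht hfree r (j + 1) with ⟨h1, -, -⟩ | ⟨-, -, -, h1⟩ | ⟨hr1, -⟩ <;> omega

theorem lowerAt_lt_succ_of_raised {i i' j : ℕ} (hb : Box n α i j) (hb' : Box n α i' j)
    (hii : i' < i) (hr : r < i') (hv' : F i' j = t) (hG' : lowerAt n α F t r j₀ i' j = t + 1)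
    (hlt : lowerAt n α F t r j₀ i j < lowerAt n α F t r j₀ i' j) :
    Box n α i' (j + 1) ∧ lowerAt n α F t r j₀ i j < lowerAt n α F t r j₀ i' (j + 1) := by
  rw [hG'] at hlt
  have h0 : lowerAt n α F t r j₀ i j = F i j := by
    rcases lowerAt_cases hF ht hfree i j with ⟨h0, -, -⟩ | ⟨hi0, -⟩ | ⟨-, -, -, h0⟩ <;> omega
  rw [h0] at hlt ⊢
  have hne : F i j ≠ t := fun he => absurd (hF.row_eq hb hb' (he.trans hv'.symm)) hii.ne'
  obtain ⟨hbx, hlt2⟩ := hF.lt_succ hb hb' hii (by omega)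
  refine ⟨hbx, ?_⟩
  rcases lowerAt_cases hF ht hfree i' (j + 1) with ⟨h1, -, -⟩ | ⟨hi1, -⟩ | ⟨-, -, -, h1⟩ <;>
    omega

theorem IsSSF.lowerAt (htr : t < r) (hmax : ∀ j, FreeTp1 n α F t r j → j ≤ j₀) :
    IsSSF n α (lowerAt n α F t r j₀) := by
  refine hF.swapCols ht (fun i c hc hv => ?_)
    (fun i j hj hb => lowerAt_succ_le hF ht hfree hmax hj hb) (fun i i' j hb hb' hii hlt => ?_)
  · have hb : Box n α i c := hF.box_of_ne_zero (by omega)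
    have hS : c ∈ lowerCols n α F t r j₀ :=
      hc.resolve_left (by rintro rfl; exact hfree.2.2.1 ⟨i, hb, hv⟩)
    exact htr.trans (lt_row_of_mem_lowerCols hF hS hb hv)
  · rcases lowerAt_cases hF ht hfree i' j with ⟨hG', hn', -⟩ | ⟨hi', hC', -, -⟩ |
        ⟨hr', -, hv', hG'⟩
    · exact lowerAt_lt_succ_of_fixed hF ht hfree hb hb' hii hG' hn' hlt
    · rw [hi'] at hlt ⊢
      exact lowerAt_lt_succ_of_lowered hF ht hfree hb (hi' ▸ hii) hC' hlt
    · exact lowerAt_lt_succ_of_raised hF ht hfree hb hb' hii hr' hv' hG' hlt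

end LowerSSF

section LowerFree

variable {n : ℕ} {α : ℕ → ℕ} {F : ℕ → ℕ → ℕ} {t r j₀ : ℕ}

theorem not_colContains_lowerAt (hfree : FreeTp1 n α F t r j₀) :
    ¬ ColContains n α (lowerAt n α F t r j₀) j₀ (t + 1) := by
  rw [lowerAt, colContains_swapCols_of_mem (Set.mem_insert _ _), Equiv.swap_apply_right]
  exact hfree.2.2.1

theorem colContains_lowerAt {c : ℕ} (hF : IsSSF n α F) (hfree : FreeTp1 n α F t r j₀)
    (hc : c = j₀ ∨ c ∈ lowerCols n α F t r j₀) : ColContains n α (lowerAt n α F t r j₀) c t :=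
  ⟨r, box_of_mem_lower hF hfree hc, lowerAt_of_mem hfree hc⟩

theorem colContains_lowerAt_iff {c v : ℕ} (hF : IsSSF n α F) (hfree : FreeTp1 n α F t r j₀)
    (hc : c ≠ j₀) : ColContains n α (lowerAt n α F t r j₀) c v ↔ ColContains n α F c v := by
  refine colContains_swapCols (fun hC => ?_)
  have hS : c ∈ lowerCols n α F t r j₀ := hC.resolve_left hc
  obtain ⟨w, -, hwb, hwv⟩ := (lowerCols_spec hS).2
  exact ⟨⟨w, hwb, hwv⟩, ⟨r, box_of_mem_lower hF hfree (Or.inr hS), (lowerCols_spec hS).1⟩⟩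

theorem colContains_lowerAt_of_mem_lowerCols {c : ℕ} (hF : IsSSF n α F)
    (hfree : FreeTp1 n α F t r j₀) (hS : c ∈ lowerCols n α F t r j₀) :
    ColContains n α (lowerAt n α F t r j₀) c (t + 1) :=
  (colContains_lowerAt_iff hF hfree (ne_of_lt hS.1)).2
    ⟨r, box_of_mem_lower hF hfree (Or.inr hS), (lowerCols_spec hS).1⟩

theorem pseudoFreePair_lowerAt {i j i' j' : ℕ} (hF : IsSSF n α F) (hfree : FreeTp1 n α F t r j₀)
    (hp : PseudoFreePair n α F t i j i' j') :
    PseudoFreePair n α (lowerAt n α F t r j₀) t i j i' j' := by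
  obtain ⟨hbi, hvi, hnci, hbi', hvi', hnci', hii, hjj, hint⟩ := hp
  have hj : j ∉ insert j₀ (lowerCols n α F t r j₀) := by
    rintro (rfl | hS)
    · exact hfree.2.2.1 ⟨i, hbi, hvi⟩
    · exact hnci ⟨r, box_of_mem_lower hF hfree (Or.inr hS), (lowerCols_spec hS).1⟩
  have hj' : j' ∉ insert j₀ (lowerCols n α F t r j₀) := by
    rintro (rfl | hS)
    · have hir := row_eq_of_mem_lower hF hfree (Or.inl rfl) hbi' hvi'
      exact hfree.2.2.2
        ⟨i, j, hbi, hvi, hnci, hfree.1, hfree.2.1, hfree.2.2.1, hir ▸ hii, hjj, hint⟩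
    · obtain ⟨w, -, hwb, hwv⟩ := (lowerCols_spec hS).2
      exact hnci' ⟨w, hwb, hwv⟩
  have hne : j ≠ j₀ := fun h => hj (Or.inl h)
  have hne' : j' ≠ j₀ := fun h => hj' (Or.inl h)
  refine ⟨hbi, by rwa [lowerAt, swapCols_apply_of_notMem hj],
    fun h => hnci ((colContains_lowerAt_iff hF hfree hne).1 h), hbi',
    by rwa [lowerAt, swapCols_apply_of_notMem hj'],
    fun h => hnci' ((colContains_lowerAt_iff hF hfree hne').1 h), hii, hjj, fun k h1 h2 => ?_⟩
  have hk : k ≠ j₀ := by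
    rintro rfl
    exact hfree.2.2.1 (hint k h1 h2).1
  exact ⟨(colContains_lowerAt_iff hF hfree hk).2 (hint k h1 h2).1,
    (colContains_lowerAt_iff hF hfree hk).2 (hint k h1 h2).2⟩

variable (hF : IsSSF n α F) (ht : 1 ≤ t) (hfree : FreeTp1 n α F t r j₀)
include hF ht hfree

theorem row_eq_of_lowerAt_eq {i : ℕ} (hv : lowerAt n α F t r j₀ i j₀ = t) : i = r := by
  rcases lowerAt_cases hF ht hfree i j₀ with ⟨hG, -⟩ | ⟨hi, -⟩ | ⟨-, hS, -⟩
  · have := hF.box_of_ne_zero (show F i j₀ ≠ 0 by omega)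
    exact (hfree.2.2.1 ⟨i, this, hG ▸ hv⟩).elim
  · exact hi
  · exact absurd hS.1 (lt_irrefl _)

theorem pseudoFreePair_of_lowerAt {i j i' j' : ℕ}
    (hp : PseudoFreePair n α (lowerAt n α F t r j₀) t i j i' j') :
    PseudoFreePair n α F t i j i' j' := by
  obtain ⟨hbi, hvi, hnci, hbi', hvi', hnci', hii, hjj, hint⟩ := hp
  have hj' : j' ∉ insert j₀ (lowerCols n α F t r j₀) := fun hC =>
    hnci' (colContains_lowerAt hF hfree hC)
  rw [lowerAt, swapCols_apply_of_notMem hj'] at hvi'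
  have hne' : j' ≠ j₀ := fun h => hj' (Or.inl h)
  have hne : j ≠ j₀ := by
    rintro rfl
    have hir := row_eq_of_lowerAt_eq hF ht hfree hvi
    refine hF.ne_of_above_right hfree.1 hfree.2.1.ge (fun v hv hbv hle => ?_)
      (fun k h1 h2 => (colContains_lowerAt_iff hF hfree h1.ne').1 (hint k h1 h2).2)
      (hir ▸ hii) hbi' hjj hvi'
    exact hfree.2.1 ▸ lt_of_le_of_ne hle
      (fun he => absurd (hF.row_eq hfree.1 hbv (hfree.2.1.trans he)) hv.ne')
  have hj : j ∉ insert j₀ (lowerCols n α F t r j₀) := fun hC =>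
    hnci (colContains_lowerAt_of_mem_lowerCols hF hfree (hC.resolve_left hne))
  rw [lowerAt, swapCols_apply_of_notMem hj] at hvi
  refine ⟨hbi, hvi, fun h => hnci ((colContains_lowerAt_iff hF hfree hne).2 h), hbi', hvi',
    fun h => hnci' ((colContains_lowerAt_iff hF hfree hne').2 h), hii, hjj, fun k h1 h2 => ?_⟩
  have hk : k ≠ j₀ := by
    rintro rfl
    exact not_colContains_lowerAt hfree (hint k h1 h2).2
  exact ⟨(colContains_lowerAt_iff hF hfree hk).1 (hint k h1 h2).1,
    (colContains_lowerAt_iff hF hfree hk).1 (hint k h1 h2).2⟩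

theorem pseudoFreePair_lowerAt_iff {i j i' j' : ℕ} :
    PseudoFreePair n α (lowerAt n α F t r j₀) t i j i' j' ↔ PseudoFreePair n α F t i j i' j' :=
  ⟨pseudoFreePair_of_lowerAt hF ht hfree, pseudoFreePair_lowerAt hF hfree⟩

theorem freeTp1_lowerAt_iff (i j : ℕ) :
    FreeTp1 n α (lowerAt n α F t r j₀) t i j ↔ FreeTp1 n α F t i j ∧ ¬(i = r ∧ j = j₀) := by
  by_cases hC : j ∈ insert j₀ (lowerCols n α F t r j₀)
  · refine iff_of_false (fun h => h.2.2.1 (colContains_lowerAt hF hfree hC))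
      (fun ⟨h, hne⟩ => ?_)
    rcases hC with rfl | hS
    · exact hne ⟨row_eq_of_mem_lower hF hfree (Or.inl rfl) h.1 h.2.1, rfl⟩
    · obtain ⟨w, -, hwb, hwv⟩ := (lowerCols_spec hS).2
      exact h.2.2.1 ⟨w, hwb, hwv⟩
  · rw [lowerAt, freeTp1_swapCols_iff hC (fun _ _ => pseudoFreePair_lowerAt_iff hF ht hfree)]
    exact (and_iff_left (fun h => hC (Or.inl h.2))).symm

theorem freeT_lowerAt_iff (i j : ℕ) :
    FreeT n α (lowerAt n α F t r j₀) t i j ↔ FreeT n α F t i j ∨ (i = r ∧ j = j₀) := by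
  by_cases hj : j = j₀
  · rw [hj, or_iff_right (fun h => h.2.2.1 ⟨r, hfree.1, hfree.2.1⟩), and_iff_left rfl]
    refine ⟨fun h => row_eq_of_lowerAt_eq hF ht hfree h.2.1, ?_⟩
    rintro rfl
    refine ⟨hfree.1, lowerAt_of_mem hfree (Or.inl rfl), not_colContains_lowerAt hfree, ?_⟩
    rintro ⟨i', j', hp⟩
    have := ((pseudoFreePair_lowerAt_iff hF ht hfree).1 hp).2.1
    have := hfree.2.1
    omega
  by_cases hS : j ∈ lowerCols n α F t r j₀
  · refine iff_of_false (fun h => h.2.2.1 (colContains_lowerAt_of_mem_lowerCols hF hfree hS)) ?_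
    rintro (h | ⟨-, h⟩)
    · exact h.2.2.1 ⟨r, box_of_mem_lower hF hfree (Or.inr hS), (lowerCols_spec hS).1⟩
    · exact hj h
  · have hC : j ∉ insert j₀ (lowerCols n α F t r j₀) := by
      rintro (h | h)
      · exact hj h
      · exact hS h
    rw [lowerAt, freeT_swapCols_iff hC (fun _ _ => pseudoFreePair_lowerAt_iff hF ht hfree)]
    exact (or_iff_left (fun h => hj h.2)).symm

end LowerFree

theorem Lop_spec {n : ℕ} {α : ℕ → ℕ} {F : ℕ → ℕ → ℕ} {t r : ℕ} (hF : IsSSF n α F)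
    (ht : 1 ≤ t) (htr : t < r) (hne : {j | FreeTp1 n α F t r j}.Nonempty) :
    IsSSF n α (Lop n α r t F) ∧ ∃ j₀, FreeTp1 n α F t r j₀ ∧ ∀ i j,
      (FreeTp1 n α (Lop n α r t F) t i j ↔ FreeTp1 n α F t i j ∧ ¬(i = r ∧ j = j₀)) ∧
      (FreeT n α (Lop n α r t F) t i j ↔ FreeT n α F t i j ∨ (i = r ∧ j = j₀)) := by
  have hbdd : BddAbove {j | FreeTp1 n α F t r j} := ⟨α r, fun j hj => hj.1.2.2.2⟩
  have hfree : FreeTp1 n α F t r (sSup {j | FreeTp1 n α F t r j}) := Nat.sSup_mem hne hbdd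
  rw [Lop_eq_lowerAt hF ht hne]
  exact ⟨hF.lowerAt ht hfree htr (fun j hj => le_csSup hbdd hj), _, hfree,
    fun i j => ⟨freeTp1_lowerAt_iff hF ht hfree i j, freeT_lowerAt_iff hF ht hfree i j⟩⟩

section Counting

theorem ncard_move {β : Type*} {P Q P' Q' : β → Prop} {j₀ : β} (hP : ∀ j, P' j ↔ P j ∧ j ≠ j₀)
    (hQ : ∀ j, Q' j ↔ Q j ∨ j = j₀) (hj₀ : P j₀) (hQj₀ : ¬ Q j₀) (hPf : {j | P j}.Finite)
    (hQf : {j | Q j}.Finite) :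
    {j | P' j}.ncard + 1 = {j | P j}.ncard ∧ {j | Q' j}.ncard = {j | Q j}.ncard + 1 := by
  have e1 : {j | P' j} = {j | P j} \ {j₀} := by
    ext j
    simp [hP]
  have e2 : {j | Q' j} = insert j₀ {j | Q j} := by
    ext j
    simp [hQ, or_comm]
  rw [e1, e2, Set.ncard_sdiff_singleton_add_one (s := {j | P j}) hj₀ hPf,
    Set.ncard_insert_of_notMem (s := {j | Q j}) hQj₀ hQf]
  exact ⟨rfl, rfl⟩

theorem iterate_counts {X Y : Type*} (T : X → X) (I : X → Prop) (a b : X → ℕ) (o : X → Y)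
    (hT : ∀ x, I x → 0 < a x → I (T x) ∧ a (T x) + 1 = a x ∧ b (T x) = b x + 1 ∧ o (T x) = o x) :
    ∀ k x, I x → k ≤ a x →
      I (T^[k] x) ∧ a (T^[k] x) + k = a x ∧ b (T^[k] x) = b x + k ∧ o (T^[k] x) = o x := by
  intro k
  induction k with
  | zero => exact fun x hx _ => ⟨hx, rfl, rfl, rfl⟩
  | succ k ih =>
    intro x hx hk
    obtain ⟨hTx, ha, hb, ho⟩ := hT x hx (by omega)
    obtain ⟨hI, ha', hb', ho'⟩ := ih (T x) hTx (by omega)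
    rw [Function.iterate_succ_apply]
    exact ⟨hI, by omega, by omega, ho'.trans ho⟩

theorem ncard_eq_sum_ncard {ι κ : Type*} {Q : ι → κ → Prop} (hQ : ∀ i, {j | Q i j}.Finite)
    (s : Finset ι) : {p : ι × κ | p.1 ∈ s ∧ Q p.1 p.2}.ncard = ∑ i ∈ s, {j | Q i j}.ncard := by
  induction s using Finset.induction_on with
  | empty => simp
  | insert a s has ih =>
    have hfin : {p : ι × κ | p.1 ∈ s ∧ Q p.1 p.2}.Finite :=
      (s.finite_toSet.biUnion fun i _ => (hQ i).image (Prod.mk i)).subset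
        fun p hp => Set.mem_biUnion hp.1 ⟨p.2, hp.2, rfl⟩
    have hsplit : {p : ι × κ | p.1 ∈ insert a s ∧ Q p.1 p.2}
        = Prod.mk a '' {j | Q a j} ∪ {p : ι × κ | p.1 ∈ s ∧ Q p.1 p.2} := by
      ext ⟨i, j⟩
      simp only [Finset.mem_insert, Set.mem_union, Set.mem_image, Set.mem_ofPred_eq, Prod.mk.injEq]
      constructor
      · rintro ⟨rfl | hi, hq⟩
        · exact Or.inl ⟨j, hq, rfl, rfl⟩
        · exact Or.inr ⟨hi, hq⟩
      · rintro (⟨j, hq, rfl, rfl⟩ | ⟨hi, hq⟩)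
        · exact ⟨Or.inl rfl, hq⟩
        · exact ⟨Or.inr hi, hq⟩
    have hdisj : Disjoint (Prod.mk a '' {j | Q a j}) {p : ι × κ | p.1 ∈ s ∧ Q p.1 p.2} := by
      rw [Set.disjoint_left]
      rintro _ ⟨j, -, rfl⟩ ⟨hi, -⟩
      exact has hi
    rw [hsplit, Set.ncard_union_eq hdisj ((hQ a).image _) hfin,
      Set.ncard_image_of_injective _ (Prod.mk_right_injective a), ih, Finset.sum_insert has]

def freeCounts (n : ℕ) (α : ℕ → ℕ) (F : ℕ → ℕ → ℕ) (t i : ℕ) : ℕ × ℕ :=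
  ({j | FreeT n α F t i j}.ncard, {j | FreeTp1 n α F t i j}.ncard)

theorem finite_setOf_of_box {n : ℕ} {α : ℕ → ℕ} {i : ℕ} {P : ℕ → Prop}
    (hP : ∀ j, P j → Box n α i j) : {j | P j}.Finite :=
  (Set.finite_Icc 1 (α i)).subset fun j hj => ⟨(hP j hj).2.2.1, (hP j hj).2.2.2⟩

variable {n : ℕ} {α : ℕ → ℕ} {F : ℕ → ℕ → ℕ} {t r : ℕ}

theorem freeCounts_Rop (hF : IsSSF n α F) (htr : t < r)
    (hne : 0 < (freeCounts n α F t r).1) :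
    IsSSF n α (Rop n α r t F) ∧
      (freeCounts n α (Rop n α r t F) t r).1 + 1 = (freeCounts n α F t r).1 ∧
      (freeCounts n α (Rop n α r t F) t r).2 = (freeCounts n α F t r).2 + 1 ∧
      ∀ i : {i // i ≠ r}, freeCounts n α (Rop n α r t F) t i = freeCounts n α F t i := by
  have hfin : {j | FreeT n α F t r j}.Finite := finite_setOf_of_box fun j hj => hj.1
  obtain ⟨hS, j₀, hfree, hiff⟩ := Rop_spec hF htr ((Set.ncard_pos hfin).1 hne)
  obtain ⟨h1, h2⟩ := ncard_move (P := FreeT n α F t r) (Q := FreeTp1 n α F t r)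
    (P' := FreeT n α (Rop n α r t F) t r) (Q' := FreeTp1 n α (Rop n α r t F) t r)
    (fun j => by rw [(hiff r j).1]; simp) (fun j => by rw [(hiff r j).2]; simp) hfree
    (fun h => by have := h.2.1; have := hfree.2.1; omega)
    hfin (finite_setOf_of_box fun j hj => hj.1)
  refine ⟨hS, h1, h2, fun ⟨i, hi⟩ => ?_⟩
  simp only [freeCounts, (hiff i _).1, (hiff i _).2, hi, false_and, not_false_eq_true, and_true,
    or_false]

theorem freeCounts_Lop (hF : IsSSF n α F) (ht : 1 ≤ t) (htr : t < r)
    (hne : 0 < (freeCounts n α F t r).2) :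
    IsSSF n α (Lop n α r t F) ∧
      (freeCounts n α (Lop n α r t F) t r).2 + 1 = (freeCounts n α F t r).2 ∧
      (freeCounts n α (Lop n α r t F) t r).1 = (freeCounts n α F t r).1 + 1 ∧
      ∀ i : {i // i ≠ r}, freeCounts n α (Lop n α r t F) t i = freeCounts n α F t i := by
  have hfin : {j | FreeTp1 n α F t r j}.Finite := finite_setOf_of_box fun j hj => hj.1
  obtain ⟨hS, j₀, hfree, hiff⟩ := Lop_spec hF ht htr ((Set.ncard_pos hfin).1 hne)
  obtain ⟨h1, h2⟩ := ncard_move (P := FreeTp1 n α F t r) (Q := FreeT n α F t r)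
    (P' := FreeTp1 n α (Lop n α r t F) t r) (Q' := FreeT n α (Lop n α r t F) t r)
    (fun j => by rw [(hiff r j).1]; simp) (fun j => by rw [(hiff r j).2]; simp) hfree
    (fun h => by have := h.2.1; have := hfree.2.1; omega)
    hfin (finite_setOf_of_box fun j hj => hj.1)
  refine ⟨hS, h1, h2, fun ⟨i, hi⟩ => ?_⟩
  simp only [freeCounts, (hiff i _).1, (hiff i _).2, hi, false_and, not_false_eq_true, and_true,
    or_false]

end Counting

section Phi

variable {n : ℕ} {α : ℕ → ℕ}

theorem freeCounts_Phi {F : ℕ → ℕ → ℕ} {t r : ℕ} (hF : IsSSF n α F) (ht : 1 ≤ t) (htr : t < r) :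
    IsSSF n α (Phi n α r t F) ∧
      freeCounts n α (Phi n α r t F) t r = (freeCounts n α F t r).swap ∧
      ∀ i : {i // i ≠ r}, freeCounts n α (Phi n α r t F) t i = freeCounts n α F t i := by
  have hPhi : Phi n α r t F = if (freeCounts n α F t r).1 < (freeCounts n α F t r).2 then
        (Lop n α r t)^[(freeCounts n α F t r).2 - (freeCounts n α F t r).1] F
      else if (freeCounts n α F t r).2 < (freeCounts n α F t r).1 then
        (Rop n α r t)^[(freeCounts n α F t r).1 - (freeCounts n α F t r).2] F
      else F := rfl
  rw [hPhi]
  split_ifs with h1 h2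
  · obtain ⟨hS, h2', h1', ho⟩ := iterate_counts (Lop n α r t) (IsSSF n α)
      (fun G => (freeCounts n α G t r).2) (fun G => (freeCounts n α G t r).1)
      (fun G (i : {i // i ≠ r}) => freeCounts n α G t i)
      (fun G hG hpos => (freeCounts_Lop hG ht htr hpos).imp_right
        fun h => h.imp_right fun h => h.imp_right funext) _ F hF (Nat.sub_le _ _)
    exact ⟨hS, Prod.ext (by simp only [Prod.fst_swap]; omega) (by simp only [Prod.snd_swap]; omega),
      congrFun ho⟩
  · obtain ⟨hS, h1', h2', ho⟩ := iterate_counts (Rop n α r t) (IsSSF n α)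
      (fun G => (freeCounts n α G t r).1) (fun G => (freeCounts n α G t r).2)
      (fun G (i : {i // i ≠ r}) => freeCounts n α G t i)
      (fun G hG hpos => (freeCounts_Rop hG htr hpos).imp_right
        fun h => h.imp_right fun h => h.imp_right funext) _ F hF (Nat.sub_le _ _)
    exact ⟨hS, Prod.ext (by simp only [Prod.fst_swap]; omega) (by simp only [Prod.snd_swap]; omega),
      congrFun ho⟩
  · exact ⟨hF, Prod.ext (by simp only [Prod.fst_swap]; omega) (by simp only [Prod.snd_swap]; omega),
      fun _ => rfl⟩

theorem freeCounts_foldl_Phi {r : ℕ} (hr : 1 ≤ r) (l : List ℕ) (hl : ∀ i ∈ l, r < i)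
    (hnd : l.Nodup) {F : ℕ → ℕ → ℕ} (hF : IsSSF n α F) :
    IsSSF n α (l.foldl (fun G i => Phi n α i r G) F) ∧
      (∀ w ∉ l, freeCounts n α (l.foldl (fun G i => Phi n α i r G) F) r w = freeCounts n α F r w) ∧
      ∀ w ∈ l, freeCounts n α (l.foldl (fun G i => Phi n α i r G) F) r w =
        (freeCounts n α F r w).swap := by
  induction l generalizing F with
  | nil => exact ⟨hF, fun _ _ => rfl, fun w hw => absurd hw List.not_mem_nil⟩
  | cons i l ih =>
    obtain ⟨hil, hnd⟩ := List.nodup_cons.1 hnd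
    obtain ⟨hS, hswap, hother⟩ := freeCounts_Phi hF hr (hl i List.mem_cons_self)
    obtain ⟨hS', hother', hswap'⟩ := ih (fun w hw => hl w (List.mem_cons_of_mem i hw)) hnd hS
    refine ⟨hS', fun w hw => ?_, fun w hw => ?_⟩
    · rw [List.foldl_cons, hother' w (fun h => hw (List.mem_cons_of_mem i h))]
      exact hother ⟨w, fun h => hw (h ▸ List.mem_cons_self)⟩
    · rw [List.foldl_cons]
      rcases List.mem_cons.1 hw with rfl | hw
      · rw [hother' w hil, hswap]
      · rw [hswap' w hw, hother ⟨w, fun h => hil (h ▸ hw)⟩]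

theorem freeCounts_PhiAll {r : ℕ} (hr : 1 ≤ r) {F : ℕ → ℕ → ℕ} (hF : IsSSF n α F) {w : ℕ}
    (hw : w ∈ Finset.Ioc r n) :
    freeCounts n α (PhiAll n α r F) r w = (freeCounts n α F r w).swap := by
  rw [Finset.mem_Ioc] at hw
  refine (freeCounts_foldl_Phi hr _ (fun i hi => ?_) List.nodup_range' hF).2.2 w ?_
  · rw [List.mem_range'_1] at hi
    omega
  · rw [List.mem_range'_1]
    omega

end Phi

theorem ncard_below_eq_sum {n : ℕ} {α : ℕ → ℕ} {Q : ℕ → ℕ → Prop}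
    (hQ : ∀ i j, Q i j → Box n α i j) (r : ℕ) :
    {p : ℕ × ℕ | r < p.1 ∧ Q p.1 p.2}.ncard = ∑ i ∈ Finset.Ioc r n, {j | Q i j}.ncard := by
  rw [← ncard_eq_sum_ncard (fun i => finite_setOf_of_box (hQ i))]
  congr 1
  ext p
  simp only [Set.mem_ofPred_eq, Finset.mem_Ioc]
  exact ⟨fun h => ⟨⟨h.1, (hQ _ _ h.2).2.1⟩, h.2⟩, fun h => ⟨h.1.1, h.2⟩⟩

theorem ncard_freeT_below {n : ℕ} {α : ℕ → ℕ} (F : ℕ → ℕ → ℕ) (t r : ℕ) :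
    {p : ℕ × ℕ | r < p.1 ∧ FreeT n α F t p.1 p.2}.ncard
      = ∑ i ∈ Finset.Ioc r n, (freeCounts n α F t i).1 :=
  ncard_below_eq_sum (fun _ _ h => h.1) r

theorem ncard_freeTp1_below {n : ℕ} {α : ℕ → ℕ} (F : ℕ → ℕ → ℕ) (t r : ℕ) :
    {p : ℕ × ℕ | r < p.1 ∧ FreeTp1 n α F t p.1 p.2}.ncard
      = ∑ i ∈ Finset.Ioc r n, (freeCounts n α F t i).2 :=
  ncard_below_eq_sum (fun _ _ h => h.1) r

/-- `Φ_r` exchanges the numbers of free entries `r` and `r+1` strictly below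
row `r`. -/
theorem stmt11 (n : ℕ) (α : ℕ → ℕ) (r : ℕ) (hr : FirstAscent n α r)
    (F' : ℕ → ℕ → ℕ) (hF' : IsSSF n (swapComp α r) F') :
    {p : ℕ × ℕ | r < p.1 ∧ FreeT n (swapComp α r) F' r p.1 p.2}.ncard
      = {p : ℕ × ℕ | r < p.1 ∧
          FreeTp1 n (swapComp α r) (PhiAll n (swapComp α r) r F') r p.1 p.2}.ncard ∧
    {p : ℕ × ℕ | r < p.1 ∧ FreeTp1 n (swapComp α r) F' r p.1 p.2}.ncard
      = {p : ℕ × ℕ | r < p.1 ∧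
          FreeT n (swapComp α r) (PhiAll n (swapComp α r) r F') r p.1 p.2}.ncard := by
  obtain ⟨hr1, -⟩ := hr
  simp only [ncard_freeT_below, ncard_freeTp1_below]
  exact ⟨Finset.sum_congr rfl fun w hw => (congrArg Prod.snd (freeCounts_PhiAll hr1 hF' hw)).symm,
    Finset.sum_congr rfl fun w hw => (congrArg Prod.fst (freeCounts_PhiAll hr1 hF' hw)).symm⟩

end Skyline
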